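/- arXiv:1107.3341 — 9 statements merged into one kernel-verified Lean document; each statement's English description precedes it below -/
import Mathlib

section
/- Let w1, w2 be words, let H1, H2 and G be finite groups, let π : G → G/Z(G) be the quotient map, let φ_i : H_i → G/Z(G) be group homomorphisms (i = 1, 2), and let x_i ∈ w_i(H_i) be elements such that: (a) C1·C2 = G/Z(G), where C_i denotes the conjugacy class of φ_i(x_i) in G/Z(G); and (b) the preimage π^{-1}(φ_1(x_1)) of φ_1(x_1) in G is contained in a single conjugacy class of G. Then w1(G)·w2(G) = G. -/
/-!
Lift `φ₂ x₂` and `φ₁ x₁` to word values `y₂ ∈ w₂(G)` and `y₁ ∈ w₁(G)`. Given `g ∈ G`, write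
`π g = c₁ c₂` with `cᵢ` conjugate to `φᵢ xᵢ`. Conjugating `y₂` gives `b ∈ w₂(G)` over `c₂`, so
`a := g b⁻¹` lies over `c₁`. By (b), transported along the conjugation taking `φ₁ x₁` to `c₁`, the
fibre over `c₁` is a single conjugacy class; it contains a conjugate of `y₁`, so `a ∈ w₁(G)`.
-/

/-- The set of values of the word `w` in the group `G`: the image of the word map
`G^d → G` induced by substitution. -/
def wordImage {d : ℕ} (w : FreeGroup (Fin d)) (G : Type*) [Group G] : Set G :=
  Set.range fun f : Fin d → G => FreeGroup.lift f w

theorem FreeGroup.map_lift_apply {α A B : Type*} [Group A] [Group B] (φ : A →* B) (f : α → A)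
    (w : FreeGroup α) : φ (FreeGroup.lift f w) = FreeGroup.lift (φ ∘ f) w :=
  FreeGroup.lift_unique (φ.comp (FreeGroup.lift f)) (fun _ => by simp)

section wordImage

variable {d : ℕ} (w : FreeGroup (Fin d)) {G Q : Type*} [Group G] [Group Q]

theorem map_mem_wordImage (φ : G →* Q) {x : G} (hx : x ∈ wordImage w G) :
    φ x ∈ wordImage w Q := by
  obtain ⟨f, rfl⟩ := hx
  exact ⟨φ ∘ f, (FreeGroup.map_lift_apply φ f w).symm⟩

theorem image_wordImage_of_surjective {π : G →* Q} (hπ : Function.Surjective π) :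
    π '' wordImage w G = wordImage w Q := by
  refine Set.Subset.antisymm (Set.image_subset_iff.2 fun x => map_mem_wordImage w π) ?_
  rintro _ ⟨f, rfl⟩
  choose s hs using fun i => hπ (f i)
  refine ⟨FreeGroup.lift s w, ⟨s, rfl⟩, ?_⟩
  rw [FreeGroup.map_lift_apply]
  exact congrArg (FreeGroup.lift · w) (funext hs)

theorem IsConj.mem_wordImage {x y : G} (hxy : IsConj x y) (hx : x ∈ wordImage w G) :
    y ∈ wordImage w G := by
  obtain ⟨c, rfl⟩ := isConj_iff.1 hxy
  exact map_mem_wordImage w (MulAut.conj c).toMonoidHom hx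

theorem mem_wordImage_of_fiber_isConj {π : G →* Q} (hπ : Function.Surjective π) {q : Q}
    (hq : q ∈ wordImage w Q) (hfiber : ∀ g₁ g₂ : G, π g₁ = q → π g₂ = q → IsConj g₁ g₂)
    {g : G} (hg : π g = q) : g ∈ wordImage w G := by
  rw [← image_wordImage_of_surjective w hπ] at hq
  obtain ⟨x, hx, hxq⟩ := hq
  exact (hfiber x g hxq hg).mem_wordImage w hx

end wordImage

theorem fiber_isConj_of_isConj {G Q : Type*} [Group G] [Group Q] {π : G →* Q}
    (hπ : Function.Surjective π) {q q' : Q} (hqq' : IsConj q q')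
    (hfiber : ∀ g₁ g₂ : G, π g₁ = q → π g₂ = q → IsConj g₁ g₂) :
    ∀ g₁ g₂ : G, π g₁ = q' → π g₂ = q' → IsConj g₁ g₂ := by
  obtain ⟨t, rfl⟩ := isConj_iff.1 hqq'
  obtain ⟨s, rfl⟩ := hπ t
  have hback : ∀ g : G, π g = π s * q * (π s)⁻¹ → π (s⁻¹ * g * s) = q := fun g hg => by
    simp [hg, mul_assoc]
  intro g₁ g₂ hg₁ hg₂
  have hconj : ∀ g : G, IsConj g (s⁻¹ * g * s) := fun g =>
    isConj_iff.2 ⟨s⁻¹, by rw [inv_inv]⟩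
  exact ((hconj g₁).trans (hfiber _ _ (hback g₁ hg₁) (hback g₂ hg₂))).trans (hconj g₂).symm

theorem stmt2_general {d1 d2 : ℕ} (w1 : FreeGroup (Fin d1)) (w2 : FreeGroup (Fin d2))
    (H1 H2 G : Type) [Group H1] [Group H2] [Group G]
    (φ1 : H1 →* G ⧸ Subgroup.center G) (φ2 : H2 →* G ⧸ Subgroup.center G)
    (x1 : H1) (x2 : H2) (hx1 : x1 ∈ wordImage w1 H1) (hx2 : x2 ∈ wordImage w2 H2)
    -- (a) the product of the conjugacy classes of `φ1 x1` and `φ2 x2` is all of `G/Z(G)`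
    (hclasses : ∀ g : G ⧸ Subgroup.center G, ∃ c1 c2 : G ⧸ Subgroup.center G,
      IsConj (φ1 x1) c1 ∧ IsConj (φ2 x2) c2 ∧ g = c1 * c2)
    -- (b) all elements of `G` lying over `φ1 x1` are conjugate in `G`
    (hfiber : ∀ g1 g2 : G, (g1 : G ⧸ Subgroup.center G) = φ1 x1 →
      (g2 : G ⧸ Subgroup.center G) = φ1 x1 → IsConj g1 g2) :
    ∀ g : G, ∃ a ∈ wordImage w1 G, ∃ b ∈ wordImage w2 G, g = a * b := by
  intro g
  set π := QuotientGroup.mk' (Subgroup.center G)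
  have hπ : Function.Surjective π := QuotientGroup.mk'_surjective _
  obtain ⟨c1, c2, hc1, hc2, hg⟩ := hclasses (π g)
  have hc2w : c2 ∈ wordImage w2 _ := hc2.mem_wordImage w2 (map_mem_wordImage w2 φ2 hx2)
  rw [← image_wordImage_of_surjective w2 hπ] at hc2w
  obtain ⟨b, hb, hπb⟩ := hc2w
  have hπa : π (g * b⁻¹) = c1 := by rw [map_mul, map_inv, hπb, hg, mul_inv_cancel_right]
  have ha : g * b⁻¹ ∈ wordImage w1 G :=
    mem_wordImage_of_fiber_isConj w1 hπ (hc1.mem_wordImage w1 (map_mem_wordImage w1 φ1 hx1))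
      (fiber_isConj_of_isConj hπ hc1 hfiber) hπa
  exact ⟨g * b⁻¹, ha, b, hb, (inv_mul_cancel_right g b).symm⟩

theorem stmt2 {d1 d2 : ℕ} (w1 : FreeGroup (Fin d1)) (w2 : FreeGroup (Fin d2))
    (H1 H2 G : Type) [Group H1] [Group H2] [Group G] [Finite H1] [Finite H2] [Finite G]
    (φ1 : H1 →* G ⧸ Subgroup.center G) (φ2 : H2 →* G ⧸ Subgroup.center G)
    (x1 : H1) (x2 : H2) (hx1 : x1 ∈ wordImage w1 H1) (hx2 : x2 ∈ wordImage w2 H2)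
    -- (a) the product of the conjugacy classes of `φ1 x1` and `φ2 x2` is all of `G/Z(G)`
    (hclasses : ∀ g : G ⧸ Subgroup.center G, ∃ c1 c2 : G ⧸ Subgroup.center G,
      IsConj (φ1 x1) c1 ∧ IsConj (φ2 x2) c2 ∧ g = c1 * c2)
    -- (b) all elements of `G` lying over `φ1 x1` are conjugate in `G`
    (hfiber : ∀ g1 g2 : G, (g1 : G ⧸ Subgroup.center G) = φ1 x1 →
      (g2 : G ⧸ Subgroup.center G) = φ1 x1 → IsConj g1 g2) :
    ∀ g : G, ∃ a ∈ wordImage w1 G, ∃ b ∈ wordImage w2 G, g = a * b :=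
  stmt2_general w1 w2 H1 H2 G φ1 φ2 x1 x2 hx1 hx2 hclasses hfiber
end

section
/- Let q ≥ 5 be an odd prime power and let a be the integer defined by 2^{a+1} = (q^2−1)_2 (so a ≥ 2). Then the map (x, y) ↦ x^{2^a} y^{2^a} from SL_2(q) × SL_2(q) to SL_2(q) is not surjective; in fact, the central involution −I of SL_2(q) is not of the form x^{2^a} y^{2^a}. -/
/-!
Every `g ∈ SL₂(q)`, `q = p ^ k`, satisfies `g ^ (p * N) = 1` as soon as `q - 1 ∣ N` and `q + 1 ∣ N`:
its eigenvalues `λ, λ⁻¹` are permuted by the Frobenius, so `λ ^ q = λ` or `λ ^ q = λ⁻¹`, hence the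
characteristic polynomial divides `(X ^ N - 1) ^ 2`, which divides `(X ^ N - 1) ^ p = X ^ (p * N) - 1`.
For odd `q` take `N = (q ^ 2 - 1) / 2 = 2 ^ a * s` with `s` odd: then every `2 ^ a`-th power has odd
order dividing `p * s`. If `x ^ 2 ^ a * y ^ 2 ^ a = -1`, the two factors commute because their
product is central, so `(-1) ^ (p * s) = 1`, which is impossible in odd characteristic.
-/

open Polynomial

theorem pow_eq_one_of_mul_sub_eq_one {L : Type*} [Field L] {p : ℕ} [Fact p.Prime] [CharP L p]
    {k N : ℕ} {t l : L} (ht : t ^ p ^ k = t) (hl : l * (t - l) = 1)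
    (h₁ : p ^ k - 1 ∣ N) (h₂ : p ^ k + 1 ∣ N) : l ^ N = 1 := by
  have hl₀ : l ≠ 0 := left_ne_zero_of_mul_eq_one hl
  have hfrob : l ^ p ^ k * (t - l ^ p ^ k) = 1 := by
    rw [← ht, ← sub_pow_char_pow, ← mul_pow, hl, one_pow]
  have hroot : (l ^ p ^ k - l) * (l ^ p ^ k - (t - l)) = 0 := by
    linear_combination hl - hfrob
  rcases mul_eq_zero.1 hroot with h | h
  · have : l ^ (p ^ k - 1) = 1 := by
      refine mul_right_cancel₀ hl₀ ?_
      rw [← pow_succ, Nat.sub_add_cancel (Nat.one_le_pow _ _ (Fact.out : p.Prime).pos),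
        one_mul, sub_eq_zero.1 h]
    obtain ⟨c, rfl⟩ := h₁
    rw [pow_mul, this, one_pow]
  · have : l ^ (p ^ k + 1) = 1 := by rw [pow_succ', sub_eq_zero.1 h, hl]
    obtain ⟨c, rfl⟩ := h₂
    rw [pow_mul, this, one_pow]

theorem Matrix.charpoly_dvd_X_pow_sub_one {F : Type*} [Field F] [Fintype F]
    (M : Matrix (Fin 2) (Fin 2) F) (hM : M.det = 1) {N : ℕ}
    (h₁ : Fintype.card F - 1 ∣ N) (h₂ : Fintype.card F + 1 ∣ N) :
    M.charpoly ∣ X ^ (ringChar F * N) - 1 := by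
  set p := ringChar F
  obtain ⟨k, hp, hcard⟩ := FiniteField.card F p
  rw [hcard] at h₁ h₂
  have : Fact p.Prime := ⟨hp⟩
  let L := AlgebraicClosure F
  set t := algebraMap F L M.trace
  have ht : t ^ p ^ (k : ℕ) = t := by rw [← map_pow, ← hcard, FiniteField.pow_card]
  have hchar : M.charpoly.map (algebraMap F L) = X ^ 2 - C t * X + 1 := by
    rw [← Matrix.charpoly_map, Matrix.charpoly_fin_two, ← RingHom.mapMatrix_apply,
      ← RingHom.map_det, hM, map_one, C_1]
    simp [t, Matrix.trace_fin_two]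
  obtain ⟨l, hl⟩ := IsAlgClosed.exists_root (X ^ 2 - C t * X + 1 : L[X])
    (ne_of_eq_of_ne (by compute_degree!) two_ne_zero)
  have hlm : l * (t - l) = 1 := by
    simp only [IsRoot, eval_add, eval_sub, eval_pow, eval_mul, eval_C, eval_X, eval_one] at hl
    linear_combination -hl
  have hfactor : X ^ 2 - C t * X + 1 = (X - C l) * (X - C (t - l)) := by
    rw [← C_1, ← hlm, C_mul, C_sub]; ring
  have hX (r : L) (hr : r ^ N = 1) : X - C r ∣ X ^ N - 1 := by
    simp [dvd_iff_isRoot, hr]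
  have hl₁ : l ^ N = 1 := pow_eq_one_of_mul_sub_eq_one ht hlm h₁ h₂
  have hm₁ : (t - l) ^ N = 1 :=
    pow_eq_one_of_mul_sub_eq_one ht (by rw [sub_sub_cancel, mul_comm, hlm]) h₁ h₂
  rw [← Polynomial.map_dvd_map' (algebraMap F L), hchar, hfactor]
  calc (X - C l) * (X - C (t - l)) ∣ (X ^ N - 1) * (X ^ N - 1) :=
        mul_dvd_mul (hX l hl₁) (hX _ hm₁)
    _ = (X ^ N - 1) ^ 2 := (sq _).symm
    _ ∣ (X ^ N - 1) ^ p := pow_dvd_pow _ hp.two_le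
    _ = _ := by simp [sub_pow_char, ← pow_mul, mul_comm]

theorem Matrix.SpecialLinearGroup.pow_ringChar_mul_eq_one {F : Type*} [Field F] [Fintype F]
    (g : Matrix.SpecialLinearGroup (Fin 2) F) {N : ℕ}
    (h₁ : Fintype.card F - 1 ∣ N) (h₂ : Fintype.card F + 1 ∣ N) :
    g ^ (ringChar F * N) = 1 := by
  refine Subtype.ext ?_
  have := aeval_eq_zero_of_dvd_aeval_eq_zero (charpoly_dvd_X_pow_sub_one _ g.prop h₁ h₂)
    (Matrix.aeval_self_charpoly (g : Matrix (Fin 2) (Fin 2) F))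
  simpa [sub_eq_zero] using this

theorem Matrix.neg_one_eq_one_of_mul_eq_neg_one {n R : Type*} [Fintype n] [DecidableEq n]
    [CommRing R] {U V : Matrix n n R} {m : ℕ} (hm : Odd m) (hU : U ^ m = 1) (hV : V ^ m = 1)
    (hUV : U * V = -1) : (-1 : Matrix n n R) = 1 := by
  have hVU : V * U = -1 := by
    rw [← neg_eq_iff_eq_neg, ← neg_mul, mul_eq_one_comm, mul_neg, hUV, neg_neg]
  rw [← hm.neg_one_pow, ← hUV, (show Commute U V from hUV.trans hVU.symm).mul_pow, hU, hV,
    one_mul]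

theorem dvd_half_sq_sub_one {q : ℕ} (hq : Odd q) :
    q - 1 ∣ (q ^ 2 - 1) / 2 ∧ q + 1 ∣ (q ^ 2 - 1) / 2 := by
  obtain ⟨c, rfl⟩ := hq
  have h : (2 * c + 1) ^ 2 = 2 * (2 * c * (c + 1)) + 1 := by ring
  simp only [h, Nat.add_sub_cancel, Nat.mul_div_cancel_left _ two_pos]
  exact ⟨⟨c + 1, rfl⟩, ⟨c, by ring⟩⟩

theorem Nat.exists_odd_div_two_eq_two_pow_mul {n a : ℕ} (ha : n.factorization 2 = a + 1) :
    ∃ s, Odd s ∧ n / 2 = 2 ^ a * s := by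
  have hn : n ≠ 0 := by rintro rfl; simp at ha
  have hodd := Nat.not_dvd_ordCompl prime_two hn
  have hfact := Nat.ordProj_mul_ordCompl_eq_self n 2
  generalize ordCompl[2] n = s at hodd hfact
  refine ⟨s, Nat.odd_iff.2 (Nat.two_dvd_ne_zero.1 hodd), ?_⟩
  rw [← hfact, ha, pow_succ, mul_right_comm, Nat.mul_div_cancel _ two_pos]

theorem stmt7_general (q a : ℕ) (hodd : Odd q)
    -- `2 ^ (a+1)` is the 2-part of `q^2 - 1`
    (ha : (q ^ 2 - 1).factorization 2 = a + 1)
    (F : Type) [Field F] [Fintype F] (hF : Fintype.card F = q) :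
    (¬ Function.Surjective (fun xy :
        Matrix.SpecialLinearGroup (Fin 2) F × Matrix.SpecialLinearGroup (Fin 2) F =>
          xy.1 ^ 2 ^ a * xy.2 ^ 2 ^ a)) ∧
    ∀ x y : Matrix.SpecialLinearGroup (Fin 2) F,
      ((x ^ 2 ^ a * y ^ 2 ^ a : Matrix.SpecialLinearGroup (Fin 2) F) :
        Matrix (Fin 2) (Fin 2) F) ≠ -1 := by
  obtain ⟨s, hs, hhalf⟩ := Nat.exists_odd_div_two_eq_two_pow_mul ha
  have hp2 : ringChar F ≠ 2 := by
    rw [Ne, FiniteField.even_card_iff_char_two, hF, Nat.odd_iff.1 hodd]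
    exact one_ne_zero
  have hm : Odd (ringChar F * s) :=
    ((CharP.char_is_prime F (ringChar F)).odd_of_ne_two hp2).mul hs
  have hexp (g : Matrix.SpecialLinearGroup (Fin 2) F) :
      ((g ^ 2 ^ a : Matrix.SpecialLinearGroup (Fin 2) F) : Matrix (Fin 2) (Fin 2) F)
        ^ (ringChar F * s) = 1 := by
    obtain ⟨h₁, h₂⟩ := dvd_half_sq_sub_one hodd
    rw [← Matrix.SpecialLinearGroup.coe_pow, ← pow_mul, mul_left_comm, ← hhalf,
      g.pow_ringChar_mul_eq_one (hF ▸ h₁) (hF ▸ h₂), Matrix.SpecialLinearGroup.coe_one]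
  have key (x y : Matrix.SpecialLinearGroup (Fin 2) F) :
      ((x ^ 2 ^ a * y ^ 2 ^ a : Matrix.SpecialLinearGroup (Fin 2) F) :
        Matrix (Fin 2) (Fin 2) F) ≠ -1 := by
    intro hxy
    rw [Matrix.SpecialLinearGroup.coe_mul] at hxy
    have := Matrix.neg_one_eq_one_of_mul_eq_neg_one hm (hexp x) (hexp y) hxy
    exact Ring.neg_one_ne_one_of_char_ne_two hp2 (by simpa using congrFun₂ this 0 0)
  refine ⟨fun hsurj => ?_, key⟩
  obtain ⟨⟨x, y⟩, hxy⟩ := hsurj ⟨-1, by simp [Matrix.det_fin_two]⟩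
  exact key x y (congrArg Subtype.val hxy)

theorem stmt7 (q a : ℕ) (hq : IsPrimePow q) (hodd : Odd q) (hq5 : 5 ≤ q)
    -- `2 ^ (a+1)` is the 2-part of `q^2 - 1`
    (ha : (q ^ 2 - 1).factorization 2 = a + 1)
    (F : Type) [Field F] [Fintype F] (hF : Fintype.card F = q) :
    (¬ Function.Surjective (fun xy :
        Matrix.SpecialLinearGroup (Fin 2) F × Matrix.SpecialLinearGroup (Fin 2) F =>
          xy.1 ^ 2 ^ a * xy.2 ^ 2 ^ a)) ∧
    ∀ x y : Matrix.SpecialLinearGroup (Fin 2) F,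
      ((x ^ 2 ^ a * y ^ 2 ^ a : Matrix.SpecialLinearGroup (Fin 2) F) :
        Matrix (Fin 2) (Fin 2) F) ≠ -1 :=
  stmt7_general q a hodd ha F hF
end

section
/- Let q be a prime power, ε = ±1, n ≥ 2, let p be a prime divisor of gcd(n, q−ε), and let z be a central element of order p in SL^ε_n(q). Define the integer a by: a = ⌊log_p n⌋ + log_p( (q−ε)_p ) if p > 2, and a = ⌊log_2 n⌋ − 1 + log_2( (q^2−1)_2 ) if p = 2. Then z ≠ x^{p^a} y^{p^a} for all x, y ∈ GL^ε_n(q). -/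
/-!
Write `Q = εq`. Then `GL^ε_n(q) ≤ GL_n(F)` with `|F| = q` resp. `q²`, and `(Q : F) = 0`, so
`p ∣ Q - 1` is prime to the characteristic. If `p^k` is the `p`-part of the order of `x`, the
`p`-part of `x` is therefore semisimple and has an eigenvalue `μ` of order exactly `p^k`. The
eigenvalues of `x` are permuted by `t ↦ t^Q` (Frobenius for `ε = 1`, Frobenius followed by
inversion for unitary `x`), so the orbit of `μ` has some length `e ≤ n` and `p^k ∣ Q^e - 1`;
lifting the exponent turns this into `k ≤ a`. Hence `x^{p^a}` and `y^{p^a}` have order prime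
to `p`. As `z` is scalar it commutes with `x^{p^a}`, so `z = x^{p^a} y^{p^a}` would give
`z^m = 1` for some `m` prime to `p`.
-/

/-- The defining condition of the unitary group: `(M^(q))ᵀ * M = 1`, where `M^(q)` raises
every entry of `M` to the `q`-th power. -/
def UnitaryMat {n : ℕ} {K : Type*} [Field K] (q : ℕ) (M : Matrix (Fin n) (Fin n) K) : Prop :=
  (M.map (· ^ q)).transpose * M = 1

/-- The special unitary group `SU_n(q)`, realized as the set of elements of
`SL_n(K)` (where `K` is the field with `q^2` elements) satisfying the unitarity condition. -/
def suSet (n q : ℕ) (K : Type*) [Field K] : Set (Matrix.SpecialLinearGroup (Fin n) K) :=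
  {g | UnitaryMat q (g : Matrix (Fin n) (Fin n) K)}

open Polynomial Matrix

section LiftingTheExponent

theorem Int.not_dvd_of_dvd_sub_one {p : ℕ} {Q : ℤ} (hp : p.Prime) (h : (p : ℤ) ∣ Q - 1) :
    ¬ (p : ℤ) ∣ Q := fun hQ => by
  have := dvd_sub hQ h
  rw [sub_sub_cancel, Int.natCast_dvd_ofNat, Nat.dvd_one] at this
  exact hp.ne_one this

theorem Int.pow_dvd_sub_one_mul_of_pow_dvd_pow_sub_one {p k e : ℕ} {Q : ℤ} (hp : p.Prime)
    (hp1 : Odd p) (hpQ : (p : ℤ) ∣ Q - 1) (h : (p : ℤ) ^ k ∣ Q ^ e - 1) :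
    (p : ℤ) ^ k ∣ (Q - 1) * e := by
  have hLTE := Int.emultiplicity_pow_sub_pow hp hp1 (y := 1) (by simpa using hpQ)
    (Int.not_dvd_of_dvd_sub_one hp hpQ) e
  rw [one_pow, ← Int.natCast_emultiplicity] at hLTE
  rw [pow_dvd_iff_le_emultiplicity] at h ⊢
  rwa [emultiplicity_mul (Nat.prime_iff_prime_int.mp hp), ← hLTE]

theorem Int.two_pow_succ_dvd_sq_sub_one_mul {k e : ℕ} {Q : ℤ} (hQ : Odd Q) (he : Even e)
    (h : 2 ^ k ∣ Q ^ e - 1) : 2 ^ (k + 1) ∣ (Q ^ 2 - 1) * e := by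
  have hLTE := Int.two_pow_sub_pow (y := 1) (by simpa using hQ.sub_odd odd_one |>.two_dvd)
    (by simpa [← even_iff_two_dvd] using hQ) he
  rw [one_pow] at hLTE
  rw [pow_dvd_iff_le_emultiplicity] at h ⊢
  rw [show Q ^ 2 - 1 = (Q + 1) * (Q - 1) by ring, emultiplicity_mul Int.prime_two,
    emultiplicity_mul Int.prime_two, ← hLTE, Nat.cast_add, Nat.cast_one]
  gcongr

theorem Int.two_pow_dvd_sq_sub_one_mul {k e : ℕ} {Q : ℤ} (hQ : Odd Q)
    (h : 2 ^ k ∣ Q ^ e - 1) : 2 ^ k ∣ (Q ^ 2 - 1) * e := by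
  have h2e : 2 ^ k ∣ Q ^ (2 * e) - 1 := by
    refine h.trans ?_
    simpa [pow_mul'] using sub_dvd_pow_sub_pow (Q ^ e) 1 2
  have := Int.two_pow_succ_dvd_sq_sub_one_mul hQ (even_two_mul e) h2e
  rw [pow_succ', Nat.cast_mul, Nat.cast_ofNat, mul_left_comm] at this
  exact (mul_dvd_mul_iff_left two_ne_zero).mp this

theorem Int.le_factorization_natAbs_add_of_pow_dvd_mul {p k e : ℕ} {m : ℤ} (hp : p.Prime)
    (hm : m ≠ 0) (he : e ≠ 0) (h : (p : ℤ) ^ k ∣ m * e) :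
    k ≤ m.natAbs.factorization p + e.factorization p := by
  rw [← Int.natAbs_dvd_natAbs, Int.natAbs_mul, Int.natAbs_pow, Int.natAbs_natCast,
    Int.natAbs_natCast, hp.pow_dvd_iff_le_factorization (by positivity)] at h
  rwa [Nat.factorization_mul (by positivity) he] at h

theorem Nat.factorization_le_log {p e n : ℕ} (hp : p.Prime) (he : e ≠ 0) (hen : e ≤ n) :
    e.factorization p ≤ Nat.log p n :=
  Nat.le_log_of_pow_le hp.one_lt ((Nat.ordProj_le p he).trans hen)

/-- The exponent `a` of the theorem, with `Q = εq`: the `p`-part of `q - ε` is that of `Q - 1`,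
and `q² - 1 = Q² - 1`. -/
def exponentBound (p n : ℕ) (Q : ℤ) : ℕ :=
  if p = 2 then Nat.log 2 n - 1 + (Q ^ 2 - 1).natAbs.factorization 2
  else Nat.log p n + (Q - 1).natAbs.factorization p

theorem le_exponentBound {p n e k : ℕ} {Q : ℤ} (hp : p.Prime) (hn : 2 ≤ n)
    (hpQ : (p : ℤ) ∣ Q - 1) (hQ : Q ^ 2 ≠ 1) (he : e ≠ 0) (hen : e ≤ n)
    (h : (p : ℤ) ^ k ∣ Q ^ e - 1) : k ≤ exponentBound p n Q := by
  have hlog := Nat.factorization_le_log hp he hen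
  unfold exponentBound
  split_ifs with hp2
  · subst hp2
    have hQodd : Odd Q := by
      rw [← Int.not_even_iff_odd, ← Int.even_sub_one]
      exact even_iff_two_dvd.mpr (by exact_mod_cast hpQ)
    have hQ2 : Q ^ 2 - 1 ≠ 0 := sub_ne_zero.mpr hQ
    have hlog2 : 1 ≤ Nat.log 2 n := Nat.le_log_of_pow_le one_lt_two (by simpa using hn)
    rcases Nat.even_or_odd e with he2 | he2
    · have := Int.le_factorization_natAbs_add_of_pow_dvd_mul Nat.prime_two hQ2 he
        (Int.two_pow_succ_dvd_sq_sub_one_mul hQodd he2 (by exact_mod_cast h))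
      omega
    · have := Int.le_factorization_natAbs_add_of_pow_dvd_mul Nat.prime_two hQ2 he
        (Int.two_pow_dvd_sq_sub_one_mul hQodd (by exact_mod_cast h))
      have : e.factorization 2 = 0 :=
        Nat.factorization_eq_zero_of_not_dvd (Nat.not_even_iff_odd.mpr he2 ∘ even_iff_two_dvd.mpr)
      omega
  · have hQ1 : Q - 1 ≠ 0 := fun h1 => hQ (by rw [sub_eq_zero.mp h1, one_pow])
    have := Int.le_factorization_natAbs_add_of_pow_dvd_mul hp hQ1 he
      (Int.pow_dvd_sub_one_mul_of_pow_dvd_pow_sub_one hp (hp.odd_of_ne_two hp2) hpQ h)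
    omega

theorem Int.natAbs_natCast_sq_sub_one {q : ℕ} (hq : 1 ≤ q) :
    ((q : ℤ) ^ 2 - 1).natAbs = q ^ 2 - 1 := by
  rw [← Int.natAbs_natCast (q ^ 2 - 1)]
  push_cast [Nat.one_le_pow 2 q hq]
  rfl

theorem exponentBound_natCast {p n q : ℕ} (hq : 1 ≤ q) :
    exponentBound p n q = if p = 2 then Nat.log 2 n - 1 + (q ^ 2 - 1).factorization 2
      else Nat.log p n + (q - 1).factorization p := by
  rw [exponentBound, Int.natAbs_natCast_sq_sub_one hq, show ((q : ℤ) - 1).natAbs = q - 1 by omega]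

theorem exponentBound_neg_natCast {p n q : ℕ} (hq : 1 ≤ q) :
    exponentBound p n (-q) = if p = 2 then Nat.log 2 n - 1 + (q ^ 2 - 1).factorization 2
      else Nat.log p n + (q + 1).factorization p := by
  rw [exponentBound, neg_sq, Int.natAbs_natCast_sq_sub_one hq,
    show (-(q : ℤ) - 1).natAbs = q + 1 by omega]

end LiftingTheExponent

section OrderOf

theorem not_dvd_orderOf_pow_prime_pow {G : Type*} [Monoid G] {p a : ℕ} (hp : p.Prime) {x : G}
    (hx : orderOf x ≠ 0) (ha : (orderOf x).factorization p ≤ a) :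
    ¬ p ∣ orderOf (x ^ p ^ a) := by
  have hdvd : orderOf (x ^ p ^ a) ∣ ordCompl[p] (orderOf x) := by
    rw [orderOf_dvd_iff_pow_eq_one, ← pow_mul, orderOf_dvd_iff_pow_eq_one.mp]
    conv_lhs => rw [← Nat.ordProj_mul_ordCompl_eq_self (orderOf x) p]
    exact mul_dvd_mul_right (pow_dvd_pow p ha) _
  exact fun h => Nat.not_dvd_ordCompl hp hx (h.trans hdvd)

theorem ne_mul_of_commute_of_orderOf_eq_prime {G : Type*} [Group G] {p : ℕ} (hp : p.Prime)
    {z u v : G} (hz : orderOf z = p) (hzu : Commute z u) (hu : ¬ p ∣ orderOf u)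
    (hv : ¬ p ∣ orderOf v) : z ≠ u * v := by
  rintro rfl
  have huv : Commute u v := by
    simpa using ((Commute.refl u).inv_right).mul_right hzu.symm
  have : (u * v) ^ (orderOf u * orderOf v) = 1 := by
    rw [huv.mul_pow, pow_mul, pow_orderOf_eq_one, one_pow, mul_comm, pow_mul,
      pow_orderOf_eq_one, one_pow, one_mul]
  have := orderOf_dvd_of_pow_eq_one this
  rw [hz] at this
  exact (hp.dvd_mul.mp this).elim hu hv

end OrderOf

section Eigenvalues

theorem exists_dvd_zpow_sub_one_of_isRoot {L : Type*} [Field L] {χ : L[X]} (hχ : χ ≠ 0)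
    {Q : ℤ} (hclosed : ∀ t : L, t ≠ 0 → χ.IsRoot t → χ.IsRoot (t ^ Q)) {μ : L} (hμ0 : μ ≠ 0)
    (hμ : χ.IsRoot μ) (hQ : IsCoprime (orderOf μ : ℤ) Q) :
    ∃ e, 0 < e ∧ e ≤ χ.natDegree ∧ (orderOf μ : ℤ) ∣ Q ^ e - 1 := by
  classical
  set u := Units.mk0 μ hμ0
  have horbit (i : ℕ) : ((u ^ Q ^ i : Lˣ) : L) ∈ χ.roots.toFinset := by
    rw [Multiset.mem_toFinset, mem_roots hχ]
    induction i with
    | zero => simpa [u] using hμ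
    | succ i ih =>
      rw [pow_succ, _root_.zpow_mul, Units.val_zpow_eq_zpow_val]
      exact hclosed _ (Units.ne_zero _) ih
  have hcard : χ.roots.toFinset.card < (Finset.range (χ.natDegree + 1)).card :=
    (Multiset.toFinset_card_le _).trans_lt (by simpa [Nat.lt_succ_iff] using card_roots' χ)
  obtain ⟨i, hi, j, hj, hij, hu⟩ :=
    Finset.exists_ne_map_eq_of_card_lt_of_maps_to hcard (fun i _ => horbit i)
  rw [Finset.mem_range] at hi hj
  wlog hlt : i < j generalizing i j
  · exact this j hj i hi hij.symm hu.symm (by omega)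
  have hmod := (zpow_eq_zpow_iff_modEq.mp (Units.val_injective hu)).dvd
  rw [show orderOf u = orderOf μ from (orderOf_units (y := u)).symm, ← Nat.sub_add_cancel hlt.le,
    pow_add, ← sub_one_mul] at hmod
  exact ⟨j - i, by omega, by omega, (hQ.pow_right (n := i)).dvd_of_dvd_mul_right hmod⟩

theorem Squarefree.exists_irreducible_dvd_not_dvd {R : Type*} [CommMonoidWithZero R]
    [GCDMonoid R] [WfDvdMonoid R] {m g : R} (hm : Squarefree m) (hmg : ¬ m ∣ g) :
    ∃ f, Irreducible f ∧ f ∣ m ∧ ¬ f ∣ g := by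
  obtain ⟨e, he⟩ := gcd_dvd_left m g
  have he0 : e ≠ 0 := by
    rintro rfl
    rw [mul_zero] at he
    subst he
    exact hmg (hm 0 (dvd_zero _)).dvd
  have heu : ¬ IsUnit e := fun hu => hmg (he ▸ hu.mul_right_dvd.mpr (gcd_dvd_right m g))
  obtain ⟨f, hf, hfe⟩ := WfDvdMonoid.exists_irreducible_factor heu he0
  have hfm : f ∣ m := he ▸ hfe.mul_left _
  refine ⟨f, hf, hfm, fun hfg => hf.not_isUnit (hm f ?_)⟩
  rw [he]
  exact mul_dvd_mul (dvd_gcd hfm hfg) hfe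

theorem Matrix.exists_aeval_charpoly_eq_zero_orderOf_eq {K ι : Type*} [Field K] [Fintype ι]
    [DecidableEq ι] {p k : ℕ} (hp : p.Prime) (hpK : (p : K) ≠ 0) {M : Matrix ι ι K}
    (hM : orderOf M = p ^ (k + 1)) :
    ∃ μ : AlgebraicClosure K, aeval μ M.charpoly = 0 ∧ orderOf μ = p ^ (k + 1) := by
  classical
  have hdvd : minpoly K M ∣ X ^ p ^ (k + 1) - 1 :=
    minpoly.dvd _ _ (by simp [← hM, pow_orderOf_eq_one])
  have hsq : Squarefree (minpoly K M) := by
    refine ((separable_X_pow_sub_C (1 : K) ?_ one_ne_zero).of_dvd (by simpa using hdvd)).squarefree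
    exact_mod_cast pow_ne_zero _ hpK
  have hndvd : ¬ minpoly K M ∣ X ^ p ^ k - 1 := by
    rintro ⟨c, hc⟩
    refine pow_ne_one_of_lt_orderOf (pow_ne_zero k hp.ne_zero)
      (hM ▸ Nat.pow_lt_pow_right hp.one_lt k.lt_succ_self) ?_
    simpa [sub_eq_zero] using congrArg (aeval M) hc
  obtain ⟨f, hf, hfm, hfg⟩ := hsq.exists_irreducible_dvd_not_dvd hndvd
  obtain ⟨μ, hμ⟩ := IsAlgClosed.exists_aeval_eq_zero (AlgebraicClosure K) f
    (degree_pos_of_irreducible hf).ne'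
  have hfμ : f ∣ minpoly K μ :=
    (minpoly.irreducible (Algebra.IsIntegral.isIntegral μ)).dvd_symm hf (minpoly.dvd K μ hμ)
  refine ⟨μ, aeval_eq_zero_of_dvd_aeval_eq_zero (hfm.trans (minpoly_dvd_charpoly M)) hμ, ?_⟩
  have := Fact.mk hp
  refine orderOf_eq_prime_pow (fun h => hfg (hfμ.trans (minpoly.dvd K μ ?_))) ?_
  · simp [h]
  · simpa [sub_eq_zero] using aeval_eq_zero_of_dvd_aeval_eq_zero (hfm.trans hdvd) hμ

theorem Matrix.exists_pow_dvd_zpow_sub_one {K ι : Type*} [Field K] [Fintype ι] [DecidableEq ι]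
    {p k : ℕ} {Q : ℤ} (hp : p.Prime) (hpQ : (p : ℤ) ∣ Q - 1) (hQK : (Q : K) = 0)
    {M : Matrix ι ι K} (hM : orderOf M = p ^ (k + 1))
    (hroots : ∀ t : AlgebraicClosure K, t ≠ 0 → aeval t M.charpoly = 0 →
      aeval (t ^ Q) M.charpoly = 0) :
    ∃ e, 0 < e ∧ e ≤ Fintype.card ι ∧ (p : ℤ) ^ (k + 1) ∣ Q ^ e - 1 := by
  have hpK : (p : K) ≠ 0 := fun h => by
    obtain ⟨c, hc⟩ := hpQ
    simpa [hQK, h] using congrArg (Int.cast : ℤ → K) hc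
  obtain ⟨μ, hμ, hord⟩ := exists_aeval_charpoly_eq_zero_orderOf_eq hp hpK hM
  have hμ0 : μ ≠ 0 := by
    rintro rfl
    have := pow_orderOf_eq_one (0 : AlgebraicClosure K)
    rw [hord, zero_pow (pow_ne_zero _ hp.ne_zero)] at this
    exact zero_ne_one this
  have hcop : IsCoprime ((p ^ (k + 1) : ℕ) : ℤ) Q := by
    rw [Nat.cast_pow]
    exact ((Irreducible.coprime_iff_not_dvd (Nat.prime_iff_prime_int.mp hp).irreducible).mpr
      (Int.not_dvd_of_dvd_sub_one hp hpQ)).pow_left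
  have hroot (t : AlgebraicClosure K) :
      (M.charpoly.map (algebraMap K _)).IsRoot t ↔ aeval t M.charpoly = 0 := by
    rw [IsRoot.def, eval_map_algebraMap]
  obtain ⟨e, he, hen, hdvd⟩ := exists_dvd_zpow_sub_one_of_isRoot
    (M.charpoly_monic.map (algebraMap K (AlgebraicClosure K))).ne_zero
    (fun t ht h => (hroot _).mpr (hroots t ht ((hroot t).mp h))) hμ0 ((hroot μ).mpr hμ)
    (hord ▸ hcop)
  refine ⟨e, he, ?_, by rwa [hord, Nat.cast_pow] at hdvd⟩
  rwa [natDegree_map, charpoly_natDegree_eq_dim] at hen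

theorem factorization_orderOf_le_exponentBound {K : Type*} [Field K] {n p : ℕ} {Q : ℤ}
    (hp : p.Prime) (hn : 2 ≤ n) (hpQ : (p : ℤ) ∣ Q - 1) (hQ : Q ^ 2 ≠ 1) (hQK : (Q : K) = 0)
    {x : GL (Fin n) K} (hx : orderOf x ≠ 0)
    (hroots : ∀ (c : ℕ) (t : AlgebraicClosure K), t ≠ 0 →
      aeval t (↑(x ^ c) : Matrix (Fin n) (Fin n) K).charpoly = 0 →
      aeval (t ^ Q) (↑(x ^ c) : Matrix (Fin n) (Fin n) K).charpoly = 0) :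
    (orderOf x).factorization p ≤ exponentBound p n Q := by
  cases hk : (orderOf x).factorization p with
  | zero => exact Nat.zero_le _
  | succ k =>
    have hy : orderOf (x ^ (orderOf x / p ^ (k + 1))) = p ^ (k + 1) :=
      orderOf_pow_orderOf_div hx (hk ▸ Nat.ordProj_dvd _ _)
    obtain ⟨e, he, hen, h⟩ := exists_pow_dvd_zpow_sub_one hp hpQ hQK
      (by rwa [orderOf_units]) (hroots _)
    exact le_exponentBound hp hn hpQ hQ he.ne' (by simpa using hen) h

end Eigenvalues

theorem aeval_pow_card_eq_zero {K L : Type*} [Field K] [Fintype K] [CommRing L] [Algebra K L]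
    {f : K[X]} {t : L} (h : aeval t f = 0) : aeval (t ^ Fintype.card K) f = 0 := by
  simpa [h] using aeval_algHom_apply (FiniteField.frobeniusAlgHom K L) t f

section Unitary

theorem Matrix.aeval_inv_charpoly_eq_zero {K L ι : Type*} [Field K] [Field L] [Algebra K L]
    [Fintype ι] [DecidableEq ι] {A B : Matrix ι ι K} (hAB : A * B = 1) {t : L}
    (h : aeval t A.charpoly = 0) : aeval t⁻¹ B.charpoly = 0 := by
  let φ := (algebraMap K L).mapMatrix (m := ι)
  have hAB' : φ A * φ B = 1 := by rw [← map_mul, hAB, map_one]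
  let U : (Matrix ι ι L)ˣ := ⟨φ A, φ B, hAB', mul_eq_one_comm.mp hAB'⟩
  have hroot (C : Matrix ι ι K) (s : L) : aeval s C.charpoly = 0 ↔ s ∈ spectrum L (φ C) := by
    rw [mem_spectrum_iff_isRoot_charpoly, RingHom.mapMatrix_apply, charpoly_map, IsRoot.def,
      eval_map_algebraMap]
  rw [hroot] at h ⊢
  have : t⁻¹ ∈ (spectrum L (U : Matrix ι ι L))⁻¹ := Set.inv_mem_inv.mpr h
  rwa [spectrum.map_inv] at this

theorem Matrix.aeval_inv_apply_charpoly_eq_zero {K L ι : Type*} [Field K] [Field L] [Algebra K L]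
    [Fintype ι] [DecidableEq ι] {σ : K →+* K} {φ : L →+* L}
    (hφ : φ.comp (algebraMap K L) = (algebraMap K L).comp σ) {M : Matrix ι ι K}
    (hM : (M.map σ)ᵀ * M = 1) {t : L} (h : aeval t M.charpoly = 0) :
    aeval (φ t)⁻¹ M.charpoly = 0 := by
  refine aeval_inv_charpoly_eq_zero hM ?_
  rw [charpoly_transpose, charpoly_map, aeval_def, eval₂_map, ← hφ, ← hom_eval₂, ← aeval_def, h,
    map_zero]

theorem exists_ringHom_eq_pow_of_card_eq_sq {K : Type*} [Field K] [Fintype K] {q : ℕ}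
    (hq : IsPrimePow q) (hK : Fintype.card K = q ^ 2) (R : Type*) [CommRing R] [Nontrivial R]
    [Algebra K R] : ∃ φ : R →+* R, ∀ x, φ x = x ^ q := by
  obtain ⟨p₀, s, hp₀, -, rfl⟩ := hq
  have := Fact.mk (Nat.prime_iff.mpr hp₀)
  have : CharP K p₀ := charP_of_card_eq_prime_pow (f := s * 2) (by rw [hK, pow_mul])
  have : CharP R p₀ := charP_of_injective_algebraMap' K p₀
  exact ⟨iterateFrobenius R p₀ s, iterateFrobenius_def p₀ s⟩

theorem unitaryMat_iff {K : Type*} [Field K] {n q : ℕ} {σ : K →+* K} (hσ : ∀ x, σ x = x ^ q)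
    {M : Matrix (Fin n) (Fin n) K} : UnitaryMat q M ↔ (M.map σ)ᵀ * M = 1 := by
  rw [UnitaryMat, show (· ^ q) = ⇑σ from funext fun x => (hσ x).symm]

variable {K : Type*} [Field K] [Fintype K] {n q : ℕ}

theorem UnitaryMat.pow (hq : IsPrimePow q) (hK : Fintype.card K = q ^ 2)
    {M : Matrix (Fin n) (Fin n) K} (hM : UnitaryMat q M) (c : ℕ) : UnitaryMat q (M ^ c) := by
  obtain ⟨σ, hσ⟩ := exists_ringHom_eq_pow_of_card_eq_sq hq hK K
  rw [unitaryMat_iff hσ] at hM ⊢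
  rw [Matrix.map_pow, Matrix.transpose_pow]
  exact pow_mul_pow_eq_one c hM

theorem UnitaryMat.aeval_zpow_neg_charpoly_eq_zero (hq : IsPrimePow q)
    (hK : Fintype.card K = q ^ 2) {M : Matrix (Fin n) (Fin n) K} (hM : UnitaryMat q M)
    {t : AlgebraicClosure K} (h : aeval t M.charpoly = 0) :
    aeval (t ^ (-(q : ℤ))) M.charpoly = 0 := by
  obtain ⟨σ, hσ⟩ := exists_ringHom_eq_pow_of_card_eq_sq hq hK K
  obtain ⟨φ, hφ⟩ := exists_ringHom_eq_pow_of_card_eq_sq hq hK (AlgebraicClosure K)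
  rw [unitaryMat_iff hσ] at hM
  have hcomm : φ.comp (algebraMap K _) = (algebraMap K _).comp σ := by
    ext c
    simp [hσ, hφ]
  simpa [hφ] using aeval_inv_apply_charpoly_eq_zero hcomm hM h

end Unitary

section Scalar

variable {K ι : Type*} [Field K] [Fintype ι] [DecidableEq ι]

theorem Matrix.eq_or_apply_eq_zero_of_diagonal_mul_eq_mul_diagonal {d : ι → K}
    {P : Matrix ι ι K} (h : diagonal d * P = P * diagonal d) (i j : ι) : d i = d j ∨ P i j = 0 := by
  have hij := congrFun (congrFun h i) j
  rw [diagonal_mul, mul_diagonal] at hij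
  rw [← sub_eq_zero (a := d i)]
  exact mul_eq_zero.mp (by rw [sub_mul, hij, mul_comm, sub_self])

theorem Matrix.exists_diagonal_det_eq_one_apply_ne {σ : K →+* K} {ζ : K} (hζ : σ ζ * ζ = 1)
    (hζ2 : ζ ^ 2 ≠ 1) {i j : ι} (hij : i ≠ j) :
    ∃ d : ι → K, (diagonal d).det = 1 ∧ ((diagonal d).map σ)ᵀ * diagonal d = 1 ∧ d i ≠ d j := by
  have hζ0 : ζ ≠ 0 := by rintro rfl; simp at hζ
  refine ⟨fun l => if l = i then ζ else if l = j then ζ⁻¹ else 1, ?_, ?_, ?_⟩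
  · rw [det_diagonal, Finset.prod_eq_mul i j hij (fun l _ hl => by simp [hl.1, hl.2])
      (by simp) (by simp)]
    simp [hij.symm, hζ0]
  · rw [diagonal_map (map_zero σ), diagonal_transpose, diagonal_mul_diagonal, ← diagonal_one]
    congr 1
    ext l
    split_ifs <;> simp [map_inv₀, ← mul_inv, hζ]
  · simp only [if_neg hij.symm, if_true]
    refine fun h => hζ2 ?_
    rw [sq]
    nth_rw 1 [h]
    exact inv_mul_cancel₀ hζ0

theorem Matrix.exists_det_eq_one_apply_ne_zero (σ : K →+* K) {i j : ι} (hij : i ≠ j) :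
    ∃ P : Matrix ι ι K, P.det = 1 ∧ (P.map σ)ᵀ * P = 1 ∧ P i j ≠ 0 := by
  set s : ι → K := fun l => if l = i then -1 else 1
  set P := (Equiv.swap i j).permMatrix K * diagonal s
  have hPσ : P.map σ = P := by
    simp only [P, Matrix.map_mul, diagonal_map (map_zero σ)]
    congr 1
    · ext a b
      simp [Equiv.Perm.permMatrix, PEquiv.toMatrix_apply, apply_ite σ]
    · simp [s, apply_ite σ]
  refine ⟨P, ?_, ?_, ?_⟩
  · simp [P, s, det_diagonal, Finset.prod_ite_eq', Equiv.Perm.sign_swap hij]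
  · rw [hPσ, transpose_mul, diagonal_transpose, transpose_permMatrix, mul_assoc,
      ← mul_assoc (Equiv.Perm.permMatrix K _), ← permMatrix_mul, mul_inv_cancel, permMatrix_one,
      one_mul, diagonal_mul_diagonal, ← diagonal_one]
    congr 1
    ext l
    by_cases hl : l = i <;> simp [s, hl]
  · simp [P, s, Equiv.Perm.permMatrix, PEquiv.toMatrix_apply, hij.symm]

theorem Matrix.scalar_eq_self_of_forall_commute {σ : K →+* K} {ζ : K} (hζ : σ ζ * ζ = 1)
    (hζ2 : ζ ^ 2 ≠ 1) {Z : Matrix ι ι K}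
    (hZ : ∀ P : Matrix ι ι K, P.det = 1 → (P.map σ)ᵀ * P = 1 → P * Z = Z * P)
    (i : ι) : scalar ι (Z i i) = Z := by
  have hoff (k l : ι) (hkl : k ≠ l) : Z k l = 0 := by
    obtain ⟨d, hdet, hd, hne⟩ := exists_diagonal_det_eq_one_apply_ne hζ hζ2 hkl
    exact (eq_or_apply_eq_zero_of_diagonal_mul_eq_mul_diagonal (hZ _ hdet hd) k l).resolve_left hne
  have hdiag : Z = diagonal fun l => Z l l := by
    ext k l
    rcases eq_or_ne k l with rfl | hkl
    · simp
    · simp [hoff k l hkl, hkl]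
  have hconst (j : ι) : Z j j = Z i i := by
    rcases eq_or_ne j i with rfl | hji
    · rfl
    obtain ⟨P, hdet, hP, hne⟩ := exists_det_eq_one_apply_ne_zero σ hji
    have := hZ P hdet hP
    rw [hdiag] at this
    exact (eq_or_apply_eq_zero_of_diagonal_mul_eq_mul_diagonal this.symm j i).resolve_right hne
  conv_rhs => rw [hdiag]
  rw [scalar_apply]
  exact congrArg diagonal (funext hconst).symm

end Scalar

theorem exists_pow_succ_eq_one_sq_ne_one {K : Type*} [Field K] [Fintype K] {q : ℕ} (hq : 2 ≤ q)
    (hK : Fintype.card K = q ^ 2) : ∃ ζ : K, ζ ^ (q + 1) = 1 ∧ ζ ^ 2 ≠ 1 := by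
  classical
  obtain ⟨g, hg⟩ := IsCyclic.exists_ofOrder_eq_natCard (α := Kˣ)
  rw [Nat.card_eq_fintype_card, Fintype.card_units, hK, ← one_pow 2, Nat.sq_sub_sq] at hg
  set ζ := g ^ (orderOf g / (q + 1))
  have hζ : orderOf ζ = q + 1 :=
    orderOf_pow_orderOf_div (by rw [hg]; exact Nat.mul_ne_zero (by omega) (by omega))
      (hg ▸ dvd_mul_right _ _)
  refine ⟨ζ, ?_, fun h => ?_⟩
  · rw [← Units.val_pow_eq_pow_val, ← hζ, pow_orderOf_eq_one, Units.val_one]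
  · refine pow_ne_one_of_lt_orderOf two_ne_zero (x := ζ) (by omega) (Units.val_eq_one.mp ?_)
    rwa [Units.val_pow_eq_pow_val]

theorem scalar_eq_self_of_forall_mem_suSet_commute {K : Type*} [Field K] [Fintype K] {n q : ℕ}
    (hq : IsPrimePow q) (hK : Fintype.card K = q ^ 2) {z : SpecialLinearGroup (Fin n) K}
    (hz : ∀ g ∈ suSet n q K, g * z = z * g) (i : Fin n) :
    scalar (Fin n) ((z : Matrix (Fin n) (Fin n) K) i i) = z := by
  obtain ⟨σ, hσ⟩ := exists_ringHom_eq_pow_of_card_eq_sq hq hK K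
  obtain ⟨ζ, hζ, hζ2⟩ := exists_pow_succ_eq_one_sq_ne_one hq.two_le hK
  refine scalar_eq_self_of_forall_commute (σ := σ) (by rwa [hσ, ← pow_succ]) hζ2
    (fun P hdet hP => ?_) i
  exact congrArg (fun g : SpecialLinearGroup (Fin n) K => (g : Matrix (Fin n) (Fin n) K))
    (hz ⟨P, hdet⟩ ((unitaryMat_iff hσ).mpr hP))

theorem Matrix.SpecialLinearGroup.coe_ne_pow_mul_pow {K : Type*} [Field K] [Fintype K]
    {n p a : ℕ} (hp : p.Prime) {z : SpecialLinearGroup (Fin n) K} {c : K}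
    (hz : scalar (Fin n) c = z) (hzp : orderOf z = p) {x y : GL (Fin n) K}
    (hx : (orderOf x).factorization p ≤ a) (hy : (orderOf y).factorization p ≤ a) :
    (z : Matrix (Fin n) (Fin n) K) ≠ ↑(x ^ p ^ a * y ^ p ^ a) := fun h => by
  refine ne_mul_of_commute_of_orderOf_eq_prime hp (z := toGL z) ?_ ?_
    (not_dvd_orderOf_pow_prime_pow hp (orderOf_pos x).ne' hx)
    (not_dvd_orderOf_pow_prime_pow hp (orderOf_pos y).ne' hy) (Units.ext h)
  · rwa [orderOf_injective _ toGL_injective]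
  · refine Units.ext ?_
    rw [Units.val_mul, Units.val_mul, coe_GL_coe_matrix, ← hz]
    exact scalar_commute c (Commute.all c) _

theorem Matrix.SpecialLinearGroup.coe_ne_pow_mul_pow_of_mem_center {F : Type*} [Field F]
    [Fintype F] {n p q : ℕ} (hn : 2 ≤ n) (hp : p.Prime) (hpq : p ∣ q - 1)
    (hF : Fintype.card F = q) {z : SpecialLinearGroup (Fin n) F}
    (hz : z ∈ Subgroup.center (SpecialLinearGroup (Fin n) F)) (hzp : orderOf z = p)
    (x y : GL (Fin n) F) :
    (z : Matrix (Fin n) (Fin n) F) ≠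
      ↑(x ^ p ^ exponentBound p n q * y ^ p ^ exponentBound p n q) := by
  have hq : 2 ≤ q := hF ▸ Fintype.one_lt_card
  have hpQ : (p : ℤ) ∣ (q : ℤ) - 1 := by
    have := Int.natCast_dvd_natCast.mpr hpq
    rwa [Nat.cast_sub (by omega), Nat.cast_one] at this
  have hQ : (q : ℤ) ^ 2 ≠ 1 := (one_lt_pow₀ (by exact_mod_cast hq : (1 : ℤ) < q) two_ne_zero).ne'
  have hbound (w : GL (Fin n) F) : (orderOf w).factorization p ≤ exponentBound p n q :=
    factorization_orderOf_le_exponentBound hp hn hpQ hQ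
      (by rw [Int.cast_natCast, ← hF, FiniteField.cast_card_eq_zero]) (orderOf_pos w).ne'
      fun _ _ _ ht => by simpa [hF] using aeval_pow_card_eq_zero ht
  exact coe_ne_pow_mul_pow hp (scalar_eq_self_of_mem_center hz ⟨0, by omega⟩) hzp (hbound x)
    (hbound y)

theorem Matrix.SpecialLinearGroup.coe_ne_pow_mul_pow_of_unitaryMat {K : Type*} [Field K]
    [Fintype K] {n p q : ℕ} (hq : IsPrimePow q) (hn : 2 ≤ n) (hp : p.Prime) (hpq : p ∣ q + 1)
    (hK : Fintype.card K = q ^ 2) {z : SpecialLinearGroup (Fin n) K}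
    (hz : ∀ g ∈ suSet n q K, g * z = z * g) (hzp : orderOf z = p) {x y : GL (Fin n) K}
    (hx : UnitaryMat q (x : Matrix (Fin n) (Fin n) K))
    (hy : UnitaryMat q (y : Matrix (Fin n) (Fin n) K)) :
    (z : Matrix (Fin n) (Fin n) K) ≠
      ↑(x ^ p ^ exponentBound p n (-q) * y ^ p ^ exponentBound p n (-q)) := by
  have hpQ : (p : ℤ) ∣ -(q : ℤ) - 1 := by
    rw [← neg_add', dvd_neg]
    exact_mod_cast hpq
  have hQ : (-(q : ℤ)) ^ 2 ≠ 1 := by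
    rw [neg_sq]
    exact (one_lt_pow₀ (by exact_mod_cast hq.one_lt : (1 : ℤ) < q) two_ne_zero).ne'
  have hQK : ((-q : ℤ) : K) = 0 := by
    have : (q : K) ^ 2 = 0 := by exact_mod_cast hK ▸ FiniteField.cast_card_eq_zero K
    simpa using this
  have hbound (w : GL (Fin n) K) (hw : UnitaryMat q (w : Matrix (Fin n) (Fin n) K)) :
      (orderOf w).factorization p ≤ exponentBound p n (-q) :=
    factorization_orderOf_le_exponentBound hp hn hpQ hQ hQK (orderOf_pos w).ne' fun c _ _ ht =>
      (Units.val_pow_eq_pow_val w c ▸ hw.pow hq hK c).aeval_zpow_neg_charpoly_eq_zero hq hK ht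
  exact coe_ne_pow_mul_pow hp (scalar_eq_self_of_forall_mem_suSet_commute hq hK hz ⟨0, by omega⟩)
    hzp (hbound x hx) (hbound y hy)

theorem stmt9 (q n p : ℕ) (hq : IsPrimePow q) (hn : 2 ≤ n) (hp : p.Prime) :
    -- the case ε = +1: SL_n(q) and GL_n(q)
    (∀ a : ℕ, p ∣ Nat.gcd n (q - 1) →
      a = (if p = 2 then Nat.log 2 n - 1 + (q ^ 2 - 1).factorization 2
        else Nat.log p n + (q - 1).factorization p) →
      ∀ (F : Type) [Field F] [Fintype F], Fintype.card F = q →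
        ∀ z : Matrix.SpecialLinearGroup (Fin n) F,
          z ∈ Subgroup.center (Matrix.SpecialLinearGroup (Fin n) F) → orderOf z = p →
          ∀ x y : Matrix.GeneralLinearGroup (Fin n) F,
            (z : Matrix (Fin n) (Fin n) F) ≠
              ((x ^ p ^ a * y ^ p ^ a : Matrix.GeneralLinearGroup (Fin n) F) :
                Matrix (Fin n) (Fin n) F)) ∧
    -- the case ε = -1: SU_n(q) ⊆ SL_n(q^2) and GU_n(q) ⊆ GL_n(q^2)
    (∀ a : ℕ, p ∣ Nat.gcd n (q + 1) →
      a = (if p = 2 then Nat.log 2 n - 1 + (q ^ 2 - 1).factorization 2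
        else Nat.log p n + (q + 1).factorization p) →
      ∀ (K : Type) [Field K] [Fintype K], Fintype.card K = q ^ 2 →
        ∀ z : Matrix.SpecialLinearGroup (Fin n) K, z ∈ suSet n q K →
          (∀ g ∈ suSet n q K, g * z = z * g) → orderOf z = p →
          ∀ x y : Matrix.GeneralLinearGroup (Fin n) K,
            UnitaryMat q (x : Matrix (Fin n) (Fin n) K) →
            UnitaryMat q (y : Matrix (Fin n) (Fin n) K) →
            (z : Matrix (Fin n) (Fin n) K) ≠
              ((x ^ p ^ a * y ^ p ^ a : Matrix.GeneralLinearGroup (Fin n) K) :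
                Matrix (Fin n) (Fin n) K)) := by
  refine ⟨fun a hpn ha F _ _ hF z hz hzp x y => ?_,
    fun a hpn ha K _ _ hK z _ hzc hzp x y hx hy => ?_⟩
  · rw [← exponentBound_natCast hq.one_lt.le] at ha
    subst ha
    exact SpecialLinearGroup.coe_ne_pow_mul_pow_of_mem_center hn hp
      (hpn.trans (Nat.gcd_dvd_right _ _)) hF hz hzp x y
  · rw [← exponentBound_neg_natCast hq.one_lt.le] at ha
    subst ha
    exact SpecialLinearGroup.coe_ne_pow_mul_pow_of_unitaryMat hq hn hp
      (hpn.trans (Nat.gcd_dvd_right _ _)) hK hzc hzp hx hy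
end

section
/- Let p > 2 be a prime, ε = ±1, and q a prime power such that the p-part of q−ε equals p (i.e. (q−ε)_p = p). Then the map (x, y) ↦ x^p y^p from SL^ε_p(q) × SL^ε_p(q) to SL^ε_p(q) is not surjective. -/
open Finset Polynomial

section PrimePart

variable {p Q : ℕ}

lemma dvd_and_not_sq_dvd_of_factorization_eq_one (hp : p.Prime) (hQ : Q.factorization p = 1) :
    p ∣ Q ∧ ¬ p ^ 2 ∣ Q := by
  have hQ0 : Q ≠ 0 := by rintro rfl; simp at hQ
  have h1 := hp.pow_dvd_iff_le_factorization (k := 1) hQ0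
  have h2 := hp.pow_dvd_iff_le_factorization (k := 2) hQ0
  rw [pow_one] at h1
  omega

lemma orderOf_natCast_zmod_sq (hp : p.Prime) (hQ : (Q - 1).factorization p = 1) :
    orderOf (Q : ZMod (p ^ 2)) = p := by
  have := Fact.mk hp
  obtain ⟨hdvd, hndvd⟩ := dvd_and_not_sq_dvd_of_factorization_eq_one hp hQ
  have hQ1 : 1 ≤ Q := by by_contra! h; simp_all
  refine orderOf_eq_prime ?_ ?_
  · have hdvdZ : (p : ℤ) ∣ (Q : ℤ) - 1 := by
      simpa [Nat.cast_sub hQ1] using Int.natCast_dvd_natCast.mpr hdvd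
    have h := dvd_sub_pow_of_dvd_sub hdvdZ 1
    rw [pow_one, one_pow] at h
    have := (ZMod.intCast_zmod_eq_zero_iff_dvd _ (p ^ 2)).mpr (by exact_mod_cast h)
    push_cast at this
    exact sub_eq_zero.mp this
  · rw [← Nat.cast_one, Ne, ZMod.natCast_eq_natCast_iff, Nat.ModEq.comm,
      Nat.modEq_iff_dvd' hQ1]
    exact hndvd

lemma not_sq_dvd_geom_sum (hp : p.Prime) (hp2 : p ≠ 2) (hQ : (Q - 1).factorization p = 1) :
    ¬ p ^ 2 ∣ ∑ i ∈ range p, Q ^ i := by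
  have := Fact.mk hp
  have hdvd := (dvd_and_not_sq_dvd_of_factorization_eq_one hp hQ).1
  rw [Nat.factorization_def _ hp] at hQ
  have hQ1 : 1 < Q := by by_contra! h; interval_cases Q <;> simp_all
  have hpQ : ¬ p ∣ Q := fun h ↦ hp.one_lt.ne' (Nat.dvd_one.mp (by
    simpa [Nat.sub_sub_self hQ1.le] using Nat.dvd_sub h hdvd))
  have hlte := padicValNat.pow_sub_pow (hp.odd_of_ne_two hp2) hQ1 (by simpa using hdvd)
    (by simpa using hpQ) hp.ne_zero
  have hgeom : (Q - 1) * ∑ i ∈ range p, Q ^ i = Q ^ p - 1 := by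
    zify [hQ1.le, Nat.one_le_pow p Q (by omega)]
    rw [mul_comm, geom_sum_mul]
  have hsum0 : ∑ i ∈ range p, Q ^ i ≠ 0 := by
    rintro h; rw [h, mul_zero] at hgeom
    have := Nat.one_lt_pow hp.ne_zero hQ1; omega
  rw [one_pow, hQ, padicValNat_self, ← hgeom, padicValNat.mul (by omega) hsum0, hQ] at hlte
  rw [padicValNat_dvd_iff_le hsum0]
  omega

lemma factorization_sq_sub_one_eq_one (hp : p.Prime) (hp2 : p ≠ 2)
    (h : (Q + 1).factorization p = 1) : (Q ^ 2 - 1).factorization p = 1 := by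
  have hdvd := (dvd_and_not_sq_dvd_of_factorization_eq_one hp h).1
  have hp3 : 2 < p := lt_of_le_of_ne hp.two_le (Ne.symm hp2)
  have hq : 2 ≤ Q := by
    by_contra! hq
    interval_cases Q
    · simp at h
    · exact absurd (Nat.le_of_dvd two_pos hdvd) (by omega)
  have hpq : ¬ p ∣ Q - 1 := fun h' ↦ by
    have h2 := Nat.dvd_sub hdvd h'
    rw [show Q + 1 - (Q - 1) = 2 by omega] at h2
    exact absurd (Nat.le_of_dvd two_pos h2) (by omega)
  have hsq : Q ^ 2 - 1 = (Q - 1) * (Q + 1) := by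
    zify [hq, Nat.one_le_pow 2 Q (by omega), show 1 ≤ Q by omega]
    ring
  rw [hsq, Nat.factorization_mul (by omega) (by omega), Finsupp.add_apply,
    Nat.factorization_eq_zero_of_not_dvd hpq, h]

end PrimePart

lemma Polynomial.Separable.dvd_of_forall_aeval_eq_zero {K L : Type*} [Field K] [Field L]
    [Algebra K L] [IsAlgClosed L] {f g : K[X]} (hf : f.Separable) (hfm : f.Monic) (hg : g ≠ 0)
    (h : ∀ x : L, aeval x f = 0 → aeval x g = 0) : f ∣ g := by
  rw [← map_dvd_map (algebraMap K L) (algebraMap K L).injective hfm,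
    (IsAlgClosed.splits (f.map _)).eq_prod_roots_of_monic (hfm.map _),
    Multiset.prod_X_sub_C_dvd_iff_le_roots (map_ne_zero hg),
    Multiset.le_iff_subset (nodup_roots hf.map)]
  intro x hx
  rw [mem_roots (map_ne_zero hg), IsRoot, eval_map_algebraMap]
  rw [mem_roots (map_ne_zero hfm.ne_zero), IsRoot, eval_map_algebraMap] at hx
  exact h x hx

lemma aeval_X_pow_sub_one {R A : Type*} [CommRing R] [Ring A] [Algebra R A] (a : A) (n : ℕ) :
    aeval a (X ^ n - 1 : R[X]) = a ^ n - 1 := by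
  simp

lemma exists_aeval_minpoly_eq_zero_orderOf_eq {K L A : Type*} [Field K] [Field L] [Algebra K L]
    [IsAlgClosed L] [Ring A] [Algebra K A] {p k : ℕ} (hp : p.Prime) (hpK : (p : K) ≠ 0) {a : A}
    (ha : a ^ p ^ (k + 1) = 1) (ha' : a ^ p ^ k ≠ 1) :
    ∃ ω : L, aeval ω (minpoly K a) = 0 ∧ orderOf ω = p ^ (k + 1) := by
  have := Fact.mk hp
  set P : K[X] := X ^ p ^ (k + 1) - 1
  have hPa : aeval a P = 0 := by rw [aeval_X_pow_sub_one, ha, sub_self]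
  have hint : IsIntegral K a :=
    ⟨P, monic_X_pow_sub_C 1 (pow_pos hp.pos _).ne', by rwa [← aeval_def]⟩
  have hdvd : minpoly K a ∣ P := minpoly.dvd K a hPa
  have hsep : (minpoly K a).Separable :=
    (X_pow_sub_one_separable_iff.mpr (by simpa using hpK)).of_dvd hdvd
  by_contra! hne
  have hdvd' : minpoly K a ∣ X ^ p ^ k - 1 :=
    hsep.dvd_of_forall_aeval_eq_zero (L := L) (minpoly.monic hint)
      (X_pow_sub_C_ne_zero (pow_pos hp.pos _) 1) fun ω hω ↦ by
        have hωP : ω ^ p ^ (k + 1) = 1 := by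
          simpa [P, sub_eq_zero] using aeval_eq_zero_of_dvd_aeval_eq_zero hdvd hω
        rw [aeval_X_pow_sub_one, sub_eq_zero]
        by_contra hωk
        exact hne ω hω (orderOf_eq_prime_pow hωk hωP)
  apply ha'
  rw [← sub_eq_zero, ← aeval_X_pow_sub_one (R := K)]
  exact minpoly.dvd_iff.mp hdvd'

lemma aeval_pow_card_pow_eq_zero {K L : Type*} [Field K] [Fintype K] [CommRing L] [Algebra K L]
    {f : K[X]} {x : L} (hx : aeval x f = 0) (i : ℕ) :
    aeval (x ^ Fintype.card K ^ i) f = 0 := by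
  induction i with
  | zero => simpa using hx
  | succ i ih =>
    rw [pow_succ, pow_mul, ← FiniteField.frobeniusAlgHom_apply, aeval_algHom_apply, ih,
      map_zero]

lemma IsOfFinOrder.injOn_pow_pow {M : Type*} [Monoid M] {ω : M} (hω : IsOfFinOrder ω) (Q : ℕ) :
    Set.InjOn (fun i ↦ ω ^ Q ^ i) (Set.Iio (orderOf (Q : ZMod (orderOf ω)))) := by
  intro i hi j hj h
  rw [hω.pow_eq_pow_iff_modEq, ← ZMod.natCast_eq_natCast_iff, Nat.cast_pow, Nat.cast_pow] at h
  exact pow_injOn_Iio_orderOf hi hj h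

lemma Matrix.det_eq_pow_geom_sum {K L ι : Type*} [Field K] [Fintype K] [Field L] [Algebra K L]
    [IsAlgClosed L] [Fintype ι] [DecidableEq ι] (g : Matrix ι ι K) {ω : L}
    (hω : aeval ω g.charpoly = 0)
    (hinj : Set.InjOn (fun i ↦ ω ^ Fintype.card K ^ i) (Set.Iio (Fintype.card ι))) :
    algebraMap K L g.det = ω ^ ∑ i ∈ range (Fintype.card ι), Fintype.card K ^ i := by
  classical
  set T := (range (Fintype.card ι)).image fun i ↦ ω ^ Fintype.card K ^ i
  have hinj' : Set.InjOn (fun i ↦ ω ^ Fintype.card K ^ i) (range (Fintype.card ι)) := by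
    simpa using hinj
  have hne : g.charpoly.map (algebraMap K L) ≠ 0 := map_ne_zero g.charpoly_monic.ne_zero
  have hle : T.val ≤ (g.charpoly.map (algebraMap K L)).roots := by
    refine (Multiset.le_iff_subset T.nodup).mpr fun y hy ↦ ?_
    obtain ⟨i, -, rfl⟩ := Finset.mem_image.mp (Finset.mem_val.mp hy)
    rw [mem_roots hne, IsRoot, eval_map_algebraMap]
    exact aeval_pow_card_pow_eq_zero hω i
  have hroots : (g.charpoly.map (algebraMap K L)).roots = T.val := by
    refine (Multiset.eq_of_le_of_card_le hle ?_).symm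
    calc Multiset.card (g.charpoly.map (algebraMap K L)).roots
        ≤ (g.charpoly.map (algebraMap K L)).natDegree := card_roots' _
      _ = T.card := by
        rw [g.charpoly_monic.natDegree_map, charpoly_natDegree_eq_dim, card_image_of_injOn hinj',
          card_range]
  rw [RingHom.map_det, RingHom.mapMatrix_apply, det_eq_prod_roots_charpoly, charpoly_map,
    hroots, prod_val, prod_image hinj']
  exact prod_pow_eq_pow_sum _ _ _

section Group

variable {G : Type*} [Group G] [Finite G] {p : ℕ}

lemma not_dvd_orderOf_pow (hp : 1 < p) (h : ∀ x : G, x ^ p ^ 2 = 1 → x ^ p = 1) (x : G) :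
    ¬ p ∣ orderOf (x ^ p) := by
  rintro ⟨n, hn⟩
  have hn0 : 0 < n := Nat.pos_of_ne_zero fun h0 ↦ (orderOf_pos (x ^ p)).ne' (by simp [hn, h0])
  refine pow_ne_one_of_lt_orderOf hn0.ne' (hn ▸ lt_mul_left hn0 hp) ?_
  have hxn : (x ^ n) ^ p ^ 2 = 1 := by
    rw [show (x ^ n) ^ p ^ 2 = (x ^ p) ^ (p * n) by rw [← pow_mul, ← pow_mul]; ring_nf, ← hn,
      pow_orderOf_eq_one]
  rw [← pow_mul, mul_comm, pow_mul, h _ hxn]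

lemma pow_mul_pow_ne_of_mem_center (hp : p.Prime) (h : ∀ x : G, x ^ p ^ 2 = 1 → x ^ p = 1)
    {z : G} (hz : z ∈ Subgroup.center G) (hzp : orderOf z = p) (x y : G) :
    x ^ p * y ^ p ≠ z := by
  intro hxy
  have hy : y ^ p = (x ^ p)⁻¹ * z := by rw [← hxy]; group
  have hcomm : Commute (x ^ p) (y ^ p) := by
    rw [Commute, SemiconjBy, hy, ← mul_assoc, mul_inv_cancel, one_mul, mul_assoc,
      ← Subgroup.mem_center_iff.mp hz, inv_mul_cancel_left]
  have hdvd := hcomm.orderOf_mul_dvd_mul_orderOf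
  rw [hxy, hzp] at hdvd
  rcases hp.dvd_mul.mp hdvd with hx | hy
  exacts [not_dvd_orderOf_pow hp.one_lt h x hx, not_dvd_orderOf_pow hp.one_lt h y hy]

end Group

lemma FiniteField.natCast_ne_zero_of_dvd_card_sub_one {K : Type*} [Field K] [Fintype K] {p : ℕ}
    (h : p ∣ Fintype.card K - 1) : (p : K) ≠ 0 := by
  intro h0
  obtain ⟨c, hc⟩ := h
  have : ((Fintype.card K - 1 : ℕ) : K) = 0 := by rw [hc, Nat.cast_mul, h0, zero_mul]
  rw [Nat.cast_sub Fintype.card_pos, FiniteField.cast_card_eq_zero, Nat.cast_one, zero_sub,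
    neg_eq_zero] at this
  exact one_ne_zero this

namespace Matrix

variable {K : Type*} [Field K] [Fintype K] {p : ℕ}

theorem pow_eq_one_of_pow_sq_eq_one (hp : p.Prime) (hp2 : p ≠ 2)
    (hK : (Fintype.card K - 1).factorization p = 1) {g : Matrix (Fin p) (Fin p) K}
    (hdet : g.det = 1) (hg : g ^ p ^ 2 = 1) : g ^ p = 1 := by
  by_contra hgp
  have hpK := FiniteField.natCast_ne_zero_of_dvd_card_sub_one
    (dvd_and_not_sq_dvd_of_factorization_eq_one hp hK).1
  obtain ⟨ω, hω, hord⟩ := exists_aeval_minpoly_eq_zero_orderOf_eq (L := AlgebraicClosure K)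
    (k := 1) (a := g) hp hpK hg (by rwa [pow_one])
  have hωg : aeval ω g.charpoly = 0 :=
    aeval_eq_zero_of_dvd_aeval_eq_zero (minpoly.dvd K g (aeval_self_charpoly g)) hω
  have hfin : IsOfFinOrder ω := orderOf_pos_iff.mp (by rw [hord]; exact pow_pos hp.pos _)
  have hinj := hfin.injOn_pow_pow (Fintype.card K)
  rw [hord, orderOf_natCast_zmod_sq hp hK, ← Fintype.card_fin p] at hinj
  have hdetω := det_eq_pow_geom_sum g hωg hinj
  rw [hdet, map_one, eq_comm, ← orderOf_dvd_iff_pow_eq_one, hord, Fintype.card_fin] at hdetω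
  exact not_sq_dvd_geom_sum hp hp2 hK hdetω

namespace SpecialLinearGroup

theorem exists_mem_center_orderOf_eq (hp : p.Prime) (hK : p ∣ Fintype.card K - 1) :
    ∃ z ∈ Subgroup.center (SpecialLinearGroup (Fin p) K), orderOf z = p := by
  classical
  have := Fact.mk hp
  obtain ⟨ζ, hζ⟩ := exists_prime_orderOf_dvd_card (G := Kˣ) p (by rwa [Fintype.card_units])
  let w : rootsOfUnity (Fintype.card (Fin p)) K :=
    ⟨ζ, by rw [mem_rootsOfUnity, Fintype.card_fin, ← hζ, pow_orderOf_eq_one]⟩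
  refine ⟨(center_equiv_rootsOfUnity' ⟨0, hp.pos⟩).symm w, SetLike.coe_mem _, ?_⟩
  rw [Subgroup.orderOf_coe, MulEquiv.orderOf_eq, ← Subgroup.orderOf_coe, hζ]

theorem mem_suSet_of_mem_center {K : Type*} [Field K] {n q : ℕ}
    {z : SpecialLinearGroup (Fin n) K} (hz : z ∈ Subgroup.center _) (hzq : z ^ (q + 1) = 1)
    (hq : q ≠ 0) : z ∈ suSet n q K := by
  obtain ⟨r, -, hr⟩ := mem_center_iff.mp hz
  have hzq' : (z : Matrix (Fin n) (Fin n) K) ^ (q + 1) = 1 := by rw [← coe_pow, hzq, coe_one]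
  show ((z : Matrix (Fin n) (Fin n) K).map (· ^ q))ᵀ * z = 1
  rw [← hr, scalar_apply] at hzq' ⊢
  rw [diagonal_map (by simp [hq]), diagonal_transpose, diagonal_mul_diagonal, ← hzq',
    diagonal_pow, pow_succ]
  rfl

theorem pow_eq_one_of_pow_sq_eq_one (hp : p.Prime) (hp2 : p ≠ 2)
    (hK : (Fintype.card K - 1).factorization p = 1) {g : SpecialLinearGroup (Fin p) K}
    (hg : g ^ p ^ 2 = 1) : g ^ p = 1 := by
  refine Subtype.ext ?_
  rw [coe_pow, coe_one]
  exact Matrix.pow_eq_one_of_pow_sq_eq_one hp hp2 hK g.prop (by rw [← coe_pow, hg, coe_one])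

theorem exists_mem_center_forall_pow_mul_pow_ne (hp : p.Prime) (hp2 : p ≠ 2)
    (hK : (Fintype.card K - 1).factorization p = 1) :
    ∃ z ∈ Subgroup.center (SpecialLinearGroup (Fin p) K), orderOf z = p ∧
      ∀ x y : SpecialLinearGroup (Fin p) K, x ^ p * y ^ p ≠ z := by
  obtain ⟨z, hz, hzp⟩ :=
    exists_mem_center_orderOf_eq hp (dvd_and_not_sq_dvd_of_factorization_eq_one hp hK).1
  exact ⟨z, hz, hzp, pow_mul_pow_ne_of_mem_center hp
    (fun _ ↦ pow_eq_one_of_pow_sq_eq_one hp hp2 hK) hz hzp⟩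

end SpecialLinearGroup

end Matrix

theorem stmt10_general (q p : ℕ) (hp : p.Prime) (hp2 : 2 < p) :
    -- the case ε = +1: the p-part of q - 1 equals p
    ((q - 1).factorization p = 1 →
      ∀ (F : Type) [Field F] [Fintype F], Fintype.card F = q →
        ¬ Function.Surjective (fun xy :
            Matrix.SpecialLinearGroup (Fin p) F × Matrix.SpecialLinearGroup (Fin p) F =>
              xy.1 ^ p * xy.2 ^ p)) ∧
    -- the case ε = -1: the p-part of q + 1 equals p
    ((q + 1).factorization p = 1 →
      ∀ (K : Type) [Field K] [Fintype K], Fintype.card K = q ^ 2 →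
        ¬ ∀ g ∈ suSet p q K, ∃ x ∈ suSet p q K, ∃ y ∈ suSet p q K,
          g = x ^ p * y ^ p) := by
  open Matrix.SpecialLinearGroup in
  refine ⟨fun hq F _ _ hF hsurj ↦ ?_, fun hq K _ _ hK hall ↦ ?_⟩
  · obtain ⟨z, -, -, hz⟩ :=
      exists_mem_center_forall_pow_mul_pow_ne (K := F) hp hp2.ne' (hF ▸ hq)
    obtain ⟨⟨x, y⟩, hxy⟩ := hsurj z
    exact hz x y hxy
  · obtain ⟨z, hzc, hzp, hz⟩ := exists_mem_center_forall_pow_mul_pow_ne (K := K) hp hp2.ne'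
      (hK ▸ factorization_sq_sub_one_eq_one hp hp2.ne' hq)
    have hzq : z ^ (q + 1) = 1 := orderOf_dvd_iff_pow_eq_one.mp <| by
      rw [hzp]; exact (dvd_and_not_sq_dvd_of_factorization_eq_one hp hq).1
    have hq0 : q ≠ 0 := by
      rintro rfl
      simp at hK
    obtain ⟨x, -, y, -, hxy⟩ := hall z (mem_suSet_of_mem_center hzc hzq hq0)
    exact hz x y hxy.symm

theorem stmt10 (q p : ℕ) (hq : IsPrimePow q) (hp : p.Prime) (hp2 : 2 < p) :
    -- the case ε = +1: the p-part of q - 1 equals p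
    ((q - 1).factorization p = 1 →
      ∀ (F : Type) [Field F] [Fintype F], Fintype.card F = q →
        ¬ Function.Surjective (fun xy :
            Matrix.SpecialLinearGroup (Fin p) F × Matrix.SpecialLinearGroup (Fin p) F =>
              xy.1 ^ p * xy.2 ^ p)) ∧
    -- the case ε = -1: the p-part of q + 1 equals p
    ((q + 1).factorization p = 1 →
      ∀ (K : Type) [Field K] [Fintype K], Fintype.card K = q ^ 2 →
        ¬ ∀ g ∈ suSet p q K, ∃ x ∈ suSet p q K, ∃ y ∈ suSet p q K,
          g = x ^ p * y ^ p) :=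
  stmt10_general q p hp hp2
end

section
/- Let G be a finite quasisimple group and let p be a prime dividing the order of Z(G). Then there exists a positive integer a (depending on G) such that the map (x, y) ↦ x^{p^a} y^{p^a} from G × G to G is not surjective. -/
/-!
Once `p ^ a` kills the `p`-part of the exponent of `G`, every `p ^ a`-th power is killed by
the `p'`-part `m` of the exponent. A central element `z` of order `p` cannot be a product
`u * v` of two such elements: since `z` is central, `v = u⁻¹ * z` with commuting factors,
so `1 = v ^ m = z ^ m`, forcing `p ∣ m`.
-/

/-- A group is quasisimple if it is perfect and its quotient by its center is a
non-abelian simple group. -/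
def IsQuasisimple (G : Type*) [Group G] : Prop :=
  commutator G = ⊤ ∧ IsSimpleGroup (G ⧸ Subgroup.center G) ∧
    ∃ a b : G ⧸ Subgroup.center G, a * b ≠ b * a

open Monoid

section

variable {G : Type*} [Group G]

theorem pow_pow_pow_ordCompl_exponent_eq_one {p a : ℕ} (ha : (exponent G).factorization p ≤ a)
    (x : G) : (x ^ p ^ a) ^ ordCompl[p] (exponent G) = 1 := by
  rw [← pow_mul]
  refine exponent_dvd_iff_forall_pow_eq_one.mp ?_ x
  calc exponent G = ordProj[p] (exponent G) * ordCompl[p] (exponent G) :=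
        (Nat.ordProj_mul_ordCompl_eq_self _ p).symm
    _ ∣ p ^ a * ordCompl[p] (exponent G) := mul_dvd_mul_right (pow_dvd_pow p ha) _

theorem pow_eq_one_of_mem_center_of_eq_mul {g u v : G} (hg : g ∈ Subgroup.center G)
    (huv : g = u * v) {m : ℕ} (hu : u ^ m = 1) (hv : v ^ m = 1) : g ^ m = 1 := by
  have hv_eq : v = u⁻¹ * g := by rw [huv, inv_mul_cancel_left]
  have hcomm : Commute u⁻¹ g := Subgroup.mem_center_iff.mp hg u⁻¹
  rwa [hv_eq, hcomm.mul_pow, inv_pow, hu, inv_one, one_mul] at hv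

end

theorem stmt12_general (G : Type) [Group G] [Fintype G]
    (p : ℕ) (hp : p.Prime) (hpZ : p ∣ Nat.card (Subgroup.center G)) :
    ∃ a : ℕ, 0 < a ∧
      ¬ Function.Surjective (fun xy : G × G => xy.1 ^ p ^ a * xy.2 ^ p ^ a) := by
  have := Fact.mk hp
  obtain ⟨z, hz⟩ := exists_prime_orderOf_dvd_card' p hpZ
  set k := (exponent G).factorization p
  refine ⟨k + 1, k.succ_pos, fun hsurj => ?_⟩
  obtain ⟨⟨x, y⟩, hxy⟩ := hsurj z
  have hzm : (z : G) ^ ordCompl[p] (exponent G) = 1 :=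
    pow_eq_one_of_mem_center_of_eq_mul z.2 hxy.symm
      (pow_pow_pow_ordCompl_exponent_eq_one k.le_succ x)
      (pow_pow_pow_ordCompl_exponent_eq_one k.le_succ y)
  have hp_dvd : p ∣ ordCompl[p] (exponent G) := by
    simpa only [← hz, Subgroup.orderOf_coe] using orderOf_dvd_of_pow_eq_one hzm
  exact Nat.not_dvd_ordCompl hp exponent_ne_zero_of_finite hp_dvd

theorem stmt12 (G : Type) [Group G] [Fintype G] (hG : IsQuasisimple G)
    (p : ℕ) (hp : p.Prime) (hpZ : p ∣ Nat.card (Subgroup.center G)) :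
    ∃ a : ℕ, 0 < a ∧
      ¬ Function.Surjective (fun xy : G × G => xy.1 ^ p ^ a * xy.2 ^ p ^ a) :=
  stmt12_general G p hp hpZ
end

section
/- Suppose n ≡ 3 (mod 9), ε = ±1, and q is a prime power with q ≡ 3 + ε (mod 9). Then the map (x, y) ↦ x^9 y^9 from SL^ε_n(q) × SL^ε_n(q) to SL^ε_n(q) is not surjective. -/
/-!
Both fields have order `≡ 4 (mod 9)`, so they contain a primitive cube root of unity `ω` which is
not a cube (a cube root would have order `9`), and the scalar `ω` lies in `SL_n` and in `SU_n`
because `3 ∣ n` and `3 ∣ q + 1`. Suppose `x⁹ y⁹ = ω`. Replacing `x, y` by `xᵏ, yᵏ` with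
`k ≡ 1 (mod 3)` divisible by the `3'`-part of the group order, we may assume `x^(3^a) = 1`.
Then `y⁹ - ω = -ω x⁻⁹ (x⁹ - 1)`, so `dim ker (x⁹ - 1) = dim ker (y⁹ - ω)`, a multiple of `9`
because `X⁹ - ω` is irreducible. As `X^(3^(i+1)) - 1 = (X^(3^i) - 1)(X^(3^i) - ω)(X^(3^i) - ω²)`
and `x^(9·3^i)` is a ninth power, induction gives `9 ∣ dim ker (x^(3^a) - 1) = n`, contradicting
`n ≡ 3 (mod 9)`.
-/

open Polynomial Module

namespace Module.End

variable {F V : Type*} [Field F] [AddCommGroup V] [Module F V]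

theorem aeval_restrict_apply (f : Module.End F V) {W : Submodule F V} (hW : ∀ x ∈ W, f x ∈ W)
    (p : F[X]) (w : W) : (aeval (f.restrict hW) p w : V) = aeval f p w := by
  induction p using Polynomial.induction_on' with
  | add p q hp hq => simp only [map_add, LinearMap.add_apply, Submodule.coe_add, hp, hq]
  | monomial k c =>
    simp only [aeval_monomial, mul_apply, algebraMap_end_apply, SetLike.val_smul]
    rw [pow_restrict, LinearMap.restrict_apply]

theorem natDegree_dvd_finrank_of_aeval_eq_zero {P : F[X]} (hP : Irreducible P)
    (f : Module.End F V) (hf : aeval f P = 0) : P.natDegree ∣ finrank F V := by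
  have := Fact.mk hP
  -- `V` becomes a vector space over the field `F[X] ⧸ (P)`, with `X` acting as `f`
  let φ : AdjoinRoot P →ₐ[F] Module.End F V := Ideal.Quotient.liftₐ _ (aeval f) fun p hp => by
    obtain ⟨r, rfl⟩ := Ideal.mem_span_singleton'.mp hp
    rw [map_mul, hf, mul_zero]
  let : Module (AdjoinRoot P) V := Module.compHom V φ.toRingHom
  have : IsScalarTower F (AdjoinRoot P) V :=
    ⟨fun c e v => show φ (c • e) v = c • φ e v by rw [map_smul]; rfl⟩
  rw [← Module.finrank_mul_finrank F (AdjoinRoot P) V,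
    (AdjoinRoot.powerBasis hP.ne_zero).finrank, AdjoinRoot.powerBasis_dim]
  exact dvd_mul_right _ _

theorem natDegree_dvd_finrank_ker_aeval {P : F[X]} (hP : Irreducible P) (f : Module.End F V) :
    P.natDegree ∣ finrank F (LinearMap.ker (aeval f P)) := by
  have hW : ∀ x ∈ LinearMap.ker (aeval f P), f x ∈ LinearMap.ker (aeval f P) := fun x hx => by
    have hcomm : f * aeval f P = aeval f P * f := by simpa using ((commute_X P).map (aeval f)).eq
    rw [LinearMap.mem_ker] at hx ⊢
    rw [← mul_apply, ← hcomm, mul_apply, hx, map_zero]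
  refine natDegree_dvd_finrank_of_aeval_eq_zero hP (f.restrict hW) ?_
  ext w
  rw [aeval_restrict_apply]
  exact w.2

theorem ker_mul_of_isUnit {u : Module.End F V} (hu : IsUnit u) (h : Module.End F V) :
    LinearMap.ker (u * h) = LinearMap.ker h :=
  LinearMap.ker_comp_of_ker_eq_bot h (LinearMap.ker_eq_bot.mpr ((isUnit_iff u).mp hu).injective)

theorem finrank_ker_aeval_mul_of_isCoprime [FiniteDimensional F V] (f : Module.End F V)
    {p q : F[X]} (hpq : IsCoprime p q) :
    finrank F (LinearMap.ker (aeval f (p * q))) =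
      finrank F (LinearMap.ker (aeval f p)) + finrank F (LinearMap.ker (aeval f q)) := by
  rw [← sup_ker_aeval_eq_ker_aeval_mul_of_coprime f hpq,
    ← Submodule.finrank_sup_add_finrank_inf_eq,
    (disjoint_ker_aeval_of_isCoprime f hpq).eq_bot, finrank_bot, add_zero]

theorem finrank_ker_pow_three_sub_one [FiniteDimensional F V] {ω : F} (hω : IsPrimitiveRoot ω 3)
    (g : Module.End F V) :
    finrank F (LinearMap.ker (g ^ 3 - 1)) =
      finrank F (LinearMap.ker (g - 1)) + finrank F (LinearMap.ker (g - algebraMap F _ ω)) +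
        finrank F (LinearMap.ker (g - algebraMap F _ (ω ^ 2))) := by
  have hcoprime {a b : F} (hab : a ≠ b) : IsCoprime (X - C a) (X - C b) :=
    isCoprime_X_sub_C_of_isUnit_sub (sub_ne_zero_of_ne hab).isUnit
  have hω1 : ω ≠ 1 := hω.ne_one (by norm_num)
  have hω21 : ω ^ 2 ≠ 1 := hω.pow_ne_one_of_pos_of_lt (by norm_num) (by norm_num)
  have hωω2 : ω ≠ ω ^ 2 := fun h => by
    simpa using hω.pow_inj (i := 1) (j := 2) (by norm_num) (by norm_num) (by simpa using h)
  have hfactor : (X ^ 3 - C 1 : F[X]) = (X - C 1) * ((X - C ω) * (X - C (ω ^ 2))) := by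
    have hsum : C ω ^ 2 + C ω + 1 = (0 : F[X]) := by
      have := hω.geom_sum_eq_zero (by norm_num)
      simp only [Finset.sum_range_succ, Finset.sum_range_zero] at this
      rw [← C_pow, ← C_1, ← C_add, ← C_add, ← C_0]
      congr 1
      linear_combination this
    have h3 : C ω ^ 3 = (1 : F[X]) := by rw [← C_pow, hω.pow_eq_one, C_1]
    rw [C_pow, C_1]
    linear_combination (X ^ 2 - X : F[X]) * hsum + (1 - X) * h3
  have key := finrank_ker_aeval_mul_of_isCoprime g
    ((hcoprime hω1.symm).mul_right (hcoprime hω21.symm))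
  rw [← hfactor, finrank_ker_aeval_mul_of_isCoprime g (hcoprime hωω2), ← add_assoc] at key
  have hev (c : F) : aeval g (X - C c) = g - algebraMap F _ c := by simp
  have hev3 : aeval g (X ^ 3 - C 1 : F[X]) = g ^ 3 - 1 := by simp
  rwa [hev3, hev, hev, hev, map_one] at key

theorem nine_dvd_finrank_ker_pow_nine_sub (g : Module.End F V) {c : F} (hc : ∀ b : F, b ^ 3 ≠ c) :
    9 ∣ finrank F (LinearMap.ker (g ^ 9 - algebraMap F _ c)) := by
  have hirr := X_pow_sub_C_irreducible_of_prime_pow Nat.prime_three (by norm_num) 2 hc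
  have h := natDegree_dvd_finrank_ker_aeval hirr g
  rwa [natDegree_X_pow_sub_C, map_sub, map_pow, aeval_X, aeval_C] at h

theorem nine_dvd_finrank_of_pow_nine_mul_pow_nine_eq [FiniteDimensional F V] {ω : F}
    (hω : IsPrimitiveRoot ω 3) (hω_cube : ∀ b : F, b ^ 3 ≠ ω) {f g : Module.End F V} {a : ℕ}
    (hf : f ^ 3 ^ a = 1) (hfg : f ^ 9 * g ^ 9 = algebraMap F _ ω) : 9 ∣ finrank F V := by
  have hω2_cube : ∀ b : F, b ^ 3 ≠ ω ^ 2 := fun b hb => hω_cube (b ^ 2) <| by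
    rw [← pow_mul, mul_comm, pow_mul, hb, ← pow_mul, show 2 * 2 = 3 + 1 from rfl, pow_succ,
      hω.pow_eq_one, one_mul]
  have hf9 : IsUnit (f ^ 9) := (IsUnit.of_pow_eq_one hf (by positivity)).pow 9
  have hbase : LinearMap.ker (f ^ 9 - 1) = LinearMap.ker (g ^ 9 - algebraMap F _ ω) := by
    have hω0 : -ω ≠ 0 := neg_ne_zero.mpr (hω.ne_zero (by norm_num))
    have hid : f ^ 9 * (g ^ 9 - algebraMap F _ ω) = (-ω) • (f ^ 9 - 1) := by
      rw [mul_sub, hfg, ← Algebra.commutes, Algebra.algebraMap_eq_smul_one, smul_mul_assoc,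
        one_mul]
      module
    rw [← ker_mul_of_isUnit hf9 (g ^ 9 - _), hid, LinearMap.ker_smul _ _ hω0]
  have key (i : ℕ) : 9 ∣ finrank F (LinearMap.ker ((f ^ 9) ^ 3 ^ i - 1)) := by
    induction i with
    | zero => rw [pow_zero, pow_one, hbase]; exact nine_dvd_finrank_ker_pow_nine_sub g hω_cube
    | succ i ih =>
      have hswap : (f ^ 9) ^ 3 ^ i = (f ^ 3 ^ i) ^ 9 := by rw [← pow_mul, ← pow_mul, mul_comm]
      rw [pow_succ 3 i, pow_mul, finrank_ker_pow_three_sub_one hω, hswap]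
      rw [hswap] at ih
      exact dvd_add (dvd_add ih (nine_dvd_finrank_ker_pow_nine_sub _ hω_cube))
        (nine_dvd_finrank_ker_pow_nine_sub _ hω2_cube)
  have := key a
  rwa [← pow_mul, mul_comm, pow_mul, hf, one_pow, sub_self, LinearMap.ker_zero, finrank_top]
    at this

end Module.End

theorem exists_pow_prime_pow_eq_one_and_pow_mul_pow_eq {G : Type*} [Group G] [Finite G] {p : ℕ}
    (hp : p.Prime) (e : ℕ) {x y z : G} (hz : z ∈ Subgroup.center G) (hzp : z ^ p = 1)
    (hxyz : x ^ e * y ^ e = z) : ∃ x' y' : G, (∃ a, x' ^ p ^ a = 1) ∧ x' ^ e * y' ^ e = z := by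
  obtain ⟨a, m, hm, hcard⟩ :=
    Nat.exists_eq_pow_mul_and_not_dvd (Nat.card_pos (α := G)).ne' p hp.ne_one
  -- `k = m ^ φ(p)` kills the `p'`-part of `x` and fixes `z`, as `k ≡ 1 [MOD p]`
  have hk : m ^ p.totient ≡ 1 [MOD p] := .pow_totient ((hp.coprime_iff_not_dvd.mpr hm).symm)
  refine ⟨x ^ m ^ p.totient, y ^ m ^ p.totient, ⟨a, ?_⟩, ?_⟩
  · obtain ⟨t, ht⟩ : m ∣ m ^ p.totient := dvd_pow_self m (Nat.totient_pos.mpr hp.pos).ne'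
    rw [← pow_mul, ht, show m * t * p ^ a = Nat.card G * t by rw [hcard]; ring, pow_mul,
      pow_card_eq_one', one_pow]
  · have hcomm : Commute (x ^ e) (y ^ e) := by
      have hy : y ^ e = (x ^ e)⁻¹ * z := by rw [← hxyz]; group
      rw [hy]
      exact (Commute.inv_right (Commute.refl _)).mul_right (Subgroup.mem_center_iff.mp hz _)
    have hswap (g : G) : (g ^ m ^ p.totient) ^ e = (g ^ e) ^ m ^ p.totient := by
      rw [← pow_mul, ← pow_mul, mul_comm]
    rw [hswap, hswap, ← hcomm.mul_pow, hxyz,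
      pow_eq_pow_iff_modEq.mpr (hk.of_dvd (orderOf_dvd_of_pow_eq_one hzp)), pow_one]

theorem FiniteField.exists_isPrimitiveRoot_three_forall_pow_three_ne {F : Type*} [Field F]
    [Fintype F] (hF : Fintype.card F % 9 = 4) :
    ∃ ω : F, IsPrimitiveRoot ω 3 ∧ ∀ b : F, b ^ 3 ≠ ω := by
  classical
  have : Fact (Nat.Prime 3) := ⟨Nat.prime_three⟩
  obtain ⟨u, hu⟩ := exists_prime_orderOf_dvd_card 3
    (show 3 ∣ Fintype.card Fˣ by rw [Fintype.card_units]; omega)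
  have hω : IsPrimitiveRoot (u : F) 3 := IsPrimitiveRoot.coe_units_iff.mpr (hu ▸ .orderOf u)
  refine ⟨u, hω, fun b hb => ?_⟩
  -- a cube root of `ω` would have order `9`, but `9 ∤ |Fˣ|`
  have hb0 : b ≠ 0 := by rintro rfl; exact u.ne_zero (by simpa using hb.symm)
  have h9 : orderOf b = 3 ^ (1 + 1) :=
    orderOf_eq_prime_pow (by rw [pow_one, hb]; exact hω.ne_one (by norm_num))
    (by rw [pow_succ, pow_one, pow_mul, hb, hω.pow_eq_one])
  have := orderOf_dvd_of_pow_eq_one (FiniteField.pow_card_sub_one_eq_one b hb0)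
  rw [h9] at this
  omega

namespace Matrix

theorem det_scalar_eq_one {ι F : Type*} [Fintype ι] [DecidableEq ι] [Field F] {ω : F} {k : ℕ}
    (hω : IsPrimitiveRoot ω k) (hk : k ∣ Fintype.card ι) : (scalar ι ω).det = 1 := by
  rw [scalar_apply, det_diagonal, Finset.prod_const, Finset.card_univ, hω.pow_eq_one_iff_dvd]
  exact hk

theorem unitaryMat_scalar {n q : ℕ} {K : Type*} [Field K] {c : K} (hq : q ≠ 0)
    (hc : c ^ (q + 1) = 1) : UnitaryMat q (scalar (Fin n) c) := by
  rw [UnitaryMat, scalar_apply, diagonal_map (f := (· ^ q)) (zero_pow hq), diagonal_transpose,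
    diagonal_mul_diagonal, ← pow_succ, hc, diagonal_one]

namespace SpecialLinearGroup

theorem pow_nine_mul_pow_nine_ne_scalar {ι F : Type*} [Fintype ι] [DecidableEq ι] [Field F]
    [Finite F] {ω : F} (hω : IsPrimitiveRoot ω 3) (hω_cube : ∀ b : F, b ^ 3 ≠ ω)
    (hι : ¬ 9 ∣ Fintype.card ι) (x y z : SpecialLinearGroup ι F)
    (hz : (z : Matrix ι ι F) = scalar ι ω) : x ^ 9 * y ^ 9 ≠ z := by
  intro hxyz
  have hz_center : z ∈ Subgroup.center (SpecialLinearGroup ι F) :=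
    Subgroup.mem_center_iff.mpr fun g => Subtype.ext <| by
      rw [coe_mul, coe_mul, hz]
      exact (scalar_commute ω (Commute.all ω) (g : Matrix ι ι F)).symm.eq
  have hz3 : z ^ 3 = 1 := Subtype.ext <| by
    rw [coe_pow, hz, ← map_pow, hω.pow_eq_one, map_one, coe_one]
  obtain ⟨x', y', ⟨a, ha⟩, h⟩ :=
    exists_pow_prime_pow_eq_one_and_pow_mul_pow_eq Nat.prime_three 9 hz_center hz3 hxyz
  refine hι ?_
  rw [← Module.finrank_fintype_fun_eq_card F]
  refine Module.End.nine_dvd_finrank_of_pow_nine_mul_pow_nine_eq hω hω_cube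
    (f := toLinAlgEquiv' (x' : Matrix ι ι F)) (g := toLinAlgEquiv' (y' : Matrix ι ι F)) (a := a)
    ?_ ?_
  · rw [← map_pow, ← coe_pow, ha, coe_one, map_one]
  · rw [← map_pow, ← map_pow, ← map_mul, ← coe_pow, ← coe_pow, ← coe_mul, h, hz]
    exact toLinAlgEquiv'.commutes ω

end SpecialLinearGroup

end Matrix

open Matrix SpecialLinearGroup in
theorem stmt14_general (n q : ℕ) (hn : n ≡ 3 [MOD 9]) :
    -- the case ε = +1: q ≡ 4 (mod 9)
    (q ≡ 4 [MOD 9] →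
      ∀ (F : Type) [Field F] [Fintype F], Fintype.card F = q →
        ¬ Function.Surjective (fun xy :
            Matrix.SpecialLinearGroup (Fin n) F × Matrix.SpecialLinearGroup (Fin n) F =>
              xy.1 ^ 9 * xy.2 ^ 9)) ∧
    -- the case ε = -1: q ≡ 2 (mod 9)
    (q ≡ 2 [MOD 9] →
      ∀ (K : Type) [Field K] [Fintype K], Fintype.card K = q ^ 2 →
        ¬ ∀ g ∈ suSet n q K, ∃ x ∈ suSet n q K, ∃ y ∈ suSet n q K,
          g = x ^ 9 * y ^ 9) := by
  unfold Nat.ModEq at *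
  have hn9 : ¬ 9 ∣ Fintype.card (Fin n) := by rw [Fintype.card_fin]; omega
  have hn3 : 3 ∣ Fintype.card (Fin n) := by rw [Fintype.card_fin]; omega
  constructor
  · intro hq F _ _ hF hsurj
    obtain ⟨ω, hω, hω_cube⟩ := FiniteField.exists_isPrimitiveRoot_three_forall_pow_three_ne
      (F := F) (by omega)
    obtain ⟨⟨x, y⟩, hxy⟩ := hsurj ⟨scalar (Fin n) ω, det_scalar_eq_one hω hn3⟩
    exact pow_nine_mul_pow_nine_ne_scalar hω hω_cube hn9 x y _ rfl hxy
  · intro hq K _ _ hK hsu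
    obtain ⟨ω, hω, hω_cube⟩ := FiniteField.exists_isPrimitiveRoot_three_forall_pow_three_ne
      (F := K) (by rw [hK, Nat.pow_mod, hq])
    have hz : UnitaryMat q (scalar (Fin n) ω) :=
      unitaryMat_scalar (by omega) (hω.pow_eq_one_iff_dvd _ |>.mpr (by omega))
    obtain ⟨x, -, y, -, hxy⟩ := hsu ⟨scalar (Fin n) ω, det_scalar_eq_one hω hn3⟩ hz
    exact pow_nine_mul_pow_nine_ne_scalar hω hω_cube hn9 x y _ rfl hxy.symm

theorem stmt14 (n q : ℕ) (hq : IsPrimePow q) (hn : n ≡ 3 [MOD 9]) :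
    -- the case ε = +1: q ≡ 4 (mod 9)
    (q ≡ 4 [MOD 9] →
      ∀ (F : Type) [Field F] [Fintype F], Fintype.card F = q →
        ¬ Function.Surjective (fun xy :
            Matrix.SpecialLinearGroup (Fin n) F × Matrix.SpecialLinearGroup (Fin n) F =>
              xy.1 ^ 9 * xy.2 ^ 9)) ∧
    -- the case ε = -1: q ≡ 2 (mod 9)
    (q ≡ 2 [MOD 9] →
      ∀ (K : Type) [Field K] [Fintype K], Fintype.card K = q ^ 2 →
        ¬ ∀ g ∈ suSet n q K, ∃ x ∈ suSet n q K, ∃ y ∈ suSet n q K,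
          g = x ^ 9 * y ^ 9) :=
  stmt14_general n q hn
end

section
/- Suppose n is an odd positive integer and q is a prime power with q ≡ 5 (mod 8). Then the map (x, y) ↦ x^8 y^8 from Sp_{2n}(q) × Sp_{2n}(q) to Sp_{2n}(q) is not surjective. -/
/-!
Write `E(g, μ)` for the `μ`-eigenspace of `g` on `V = F^(2n)`. Since `q ≡ 5 (mod 8)` there is
`i ∈ F` with `i² = -1`. For symplectic `g`, `E(g^8, -1) = E(g^4, i) ⊕ E(g^4, -i)`, and the two
summands have the same dimension: a symplectic matrix is conjugate to its inverse transpose, so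
`rank (g - c) = rank (g - c⁻¹)`, and `i⁻¹ = -i`.
On `E(g^4, i)` we have `g^8 = -1`, so `⟨g⟩`, of order 16, acts freely on the nonzero vectors,
whence `16 ∣ q^d - 1` and, by lifting the exponent, `4 ∣ d`. Thus `8 ∣ dim E(g^8, -1)`.

If `x^8 y^8 = -1`, replace `x, y` by `x^c, y^c` with `c` the odd part of `|Sp_{2n}(q)|`, so that
`x` has `2`-power order. Then `E(x^8, 1) = E(y^8, -1)`, and the splittings
`E(x^(2^(j+1)), 1) = E(x^(2^j), 1) ⊕ E(x^(2^j), -1)` climb from it to `E(1, 1) = V` in steps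
divisible by `8`. So `8 ∣ 2n`, which fails for odd `n`.
-/

open Function Module Matrix MulAction Polynomial

theorem Nat.two_pow_dvd_of_two_pow_add_two_dvd_pow_sub_one {q d r : ℕ} (hq : q % 8 = 5)
    (h : 2 ^ (r + 2) ∣ q ^ d - 1) : 2 ^ r ∣ d := by
  have hq4 : (4 : ℤ) ∣ q - 1 := by omega
  have hq2 : ¬ (2 : ℤ) ∣ q := by omega
  have hv : emultiplicity (2 : ℤ) (q - 1) = 2 :=
    emultiplicity_eq_coe.mpr ⟨by simpa using hq4, by norm_num; omega⟩
  have hd : (2 : ℤ) ^ (r + 2) ∣ (q : ℤ) ^ d - 1 ^ d := by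
    have hq1 : 1 ≤ q ^ d := Nat.one_le_pow _ _ (by omega)
    rw [one_pow, ← Nat.cast_pow, ← Nat.cast_one, ← Nat.cast_sub hq1]
    exact_mod_cast h
  rw [pow_dvd_iff_le_emultiplicity, Int.two_pow_sub_pow' d hq4 hq2, hv] at hd
  have : (r : ℕ∞) ≤ emultiplicity (2 : ℤ) d := by
    rw [Nat.cast_add, add_comm] at hd
    exact (ENat.add_le_add_iff_left (by simp)).mp hd
  exact_mod_cast (pow_dvd_iff_le_emultiplicity.mpr this)

theorem FiniteField.two_ne_zero_of_card_mod_two_eq_one {F : Type*} [Field F] [Fintype F]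
    (hF : Fintype.card F % 2 = 1) : (2 : F) ≠ 0 :=
  Ring.two_ne_zero fun h => by have := FiniteField.even_card_iff_char_two.mp h; omega

theorem exists_pow_two_pow_eq_one_and_pow_mul_pow_eq {G : Type*} [Group G] [Finite G]
    {x y z : G} (hz : ∀ g, Commute g z) (hz2 : z ^ 2 = 1) {k : ℕ} (h : x ^ k * y ^ k = z) :
    ∃ s t : G, (∃ α : ℕ, s ^ 2 ^ α = 1) ∧ s ^ k * t ^ k = z := by
  set N := Nat.card G
  have hN : N ≠ 0 := Nat.card_pos.ne'
  obtain ⟨m, hm⟩ : Odd (ordCompl[2] N) :=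
    Nat.coprime_two_left.mp (Nat.coprime_ordCompl Nat.prime_two hN)
  refine ⟨x ^ ordCompl[2] N, y ^ ordCompl[2] N, ⟨N.factorization 2, ?_⟩, ?_⟩
  · rw [← pow_mul, mul_comm, Nat.ordProj_mul_ordCompl_eq_self, pow_card_eq_one']
  · have hy : y ^ k = (x ^ k)⁻¹ * z := eq_inv_mul_of_mul_eq h
    rw [← pow_mul, ← pow_mul, mul_comm _ k, pow_mul, pow_mul y, hy, (hz _).mul_pow, hm, inv_pow,
      mul_inv_cancel_left, pow_succ, pow_mul, hz2, one_pow, one_mul]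

namespace Equiv.Perm

variable {X : Type*} [Finite X]

theorem dvd_card_of_forall_minimalPeriod_eq (σ : Perm X) {m : ℕ}
    (h : ∀ x, minimalPeriod σ x = m) : m ∣ Nat.card X := by
  classical
  have := Fintype.ofFinite X
  have horbit (x : X) : Nat.card (orbit (Subgroup.zpowers σ) x) = m := by
    rw [Nat.card_eq_fintype_card, ← minimalPeriod_eq_card, ← h x]
    rfl
  rw [Nat.card_congr (selfEquivSigmaOrbits (Subgroup.zpowers σ) X), Nat.card_sigma]
  exact Finset.dvd_sum fun ω _ => (horbit _).symm ▸ dvd_rfl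

theorem two_pow_succ_dvd_card_of_pow_two_pow (σ : Perm X) (r : ℕ)
    (hσ : σ ^ 2 ^ (r + 1) = 1) (hfree : ∀ x, (σ ^ 2 ^ r) x ≠ x) :
    2 ^ (r + 1) ∣ Nat.card X := by
  have : Fact (Nat.Prime 2) := ⟨Nat.prime_two⟩
  refine σ.dvd_card_of_forall_minimalPeriod_eq fun x => minimalPeriod_eq_prime_pow ?_ ?_
  · simpa [IsPeriodicPt, IsFixedPt, iterate_eq_pow] using hfree x
  · simp [IsPeriodicPt, IsFixedPt, iterate_eq_pow, hσ]

end Equiv.Perm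

namespace Module.End

variable {F V : Type*} [Field F] [AddCommGroup V] [Module F V]

theorem two_pow_succ_dvd_card_sub_one_of_pow_two_pow_eq_neg_one [Finite V]
    (h2 : (2 : F) ≠ 0) (e : End F V) (r : ℕ) (he : e ^ 2 ^ r = -1) :
    2 ^ (r + 1) ∣ Nat.card V - 1 := by
  classical
  have he1 : e ^ 2 ^ (r + 1) = 1 := by rw [pow_succ, pow_mul, he, neg_one_sq]
  let u := Units.ofPowEqOne e _ he1 (by positivity)
  let σ := (toPerm u : Equiv.Perm V).subtypePerm (p := (· ≠ 0)) fun v => by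
    simp only [toPerm_apply, ne_eq, smul_eq_zero_iff_eq]
  have hσ (n : ℕ) (v : {v : V // v ≠ 0}) : ((σ ^ n) v : V) = (e ^ n) v := by
    rw [Equiv.Perm.subtypePerm_pow]
    change (toPermHom _ V u ^ n) v = _
    rw [← map_pow, toPermHom_apply, toPerm_apply, Units.smul_def, Units.val_pow_eq_pow_val,
      Units.val_ofPowEqOne, Module.End.smul_def]
  have hcard : Nat.card {v : V // v ≠ 0} = Nat.card V - 1 := by
    have := Fintype.ofFinite V
    simp [Nat.card_eq_fintype_card, Fintype.card_subtype_compl]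
  rw [← hcard]
  refine σ.two_pow_succ_dvd_card_of_pow_two_pow r (Equiv.ext fun v => Subtype.ext ?_) fun v h => ?_
  · rw [hσ, he1]; rfl
  · have : -(v : V) = v := by simpa [hσ, he] using congrArg Subtype.val h
    refine v.2 ((smul_eq_zero.mp ?_).resolve_left h2)
    rw [two_smul]
    nth_rw 1 [← this]
    exact neg_add_cancel _

theorem eigenspace_eq_ker_aeval (f : End F V) (μ : F) :
    f.eigenspace μ = LinearMap.ker (aeval f (X - C μ)) := by
  rw [eigenspace_def, map_sub, aeval_X, aeval_C, Algebra.algebraMap_eq_smul_one]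

variable [FiniteDimensional F V]

theorem two_pow_dvd_finrank_of_pow_two_pow_eq_neg_one [Fintype F]
    (hF : Fintype.card F % 8 = 5) (e : End F V) (r : ℕ) (he : e ^ 2 ^ (r + 1) = -1) :
    2 ^ r ∣ finrank F V := by
  have := Module.finite_of_finite F (M := V)
  have h := e.two_pow_succ_dvd_card_sub_one_of_pow_two_pow_eq_neg_one
    (FiniteField.two_ne_zero_of_card_mod_two_eq_one (by omega)) (r + 1) he
  rw [natCard_eq_pow_finrank (K := F), Nat.card_eq_fintype_card] at h
  exact Nat.two_pow_dvd_of_two_pow_add_two_dvd_pow_sub_one hF h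

theorem two_pow_dvd_finrank_eigenspace_pow_two_pow [Fintype F]
    (hF : Fintype.card F % 8 = 5) (f : End F V) (r : ℕ) {i : F} (hi : i ^ 2 = -1) :
    2 ^ r ∣ finrank F ((f ^ 2 ^ r).eigenspace i) := by
  have hf : ∀ v ∈ (f ^ 2 ^ r).eigenspace i, f v ∈ (f ^ 2 ^ r).eigenspace i :=
    mapsTo_genEigenspace_of_comm ((Commute.refl f).pow_left (2 ^ r)) i 1
  refine two_pow_dvd_finrank_of_pow_two_pow_eq_neg_one hF (f.restrict hf) r ?_
  ext ⟨v, hv⟩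
  rw [mem_eigenspace_iff] at hv
  rw [pow_restrict, LinearMap.restrict_apply]
  change (f ^ 2 ^ (r + 1)) v = -v
  rw [pow_succ, pow_mul, sq, mul_apply, hv, map_smul, hv, smul_smul, ← sq, hi, neg_one_smul]

theorem finrank_eigenspace_sq (f : End F V) {a : F} (ha : a ≠ -a) :
    finrank F ((f ^ 2).eigenspace (a ^ 2)) =
      finrank F (f.eigenspace a) + finrank F (f.eigenspace (-a)) := by
  have hcop : IsCoprime (X - C a) (X - C (-a)) :=
    isCoprime_X_sub_C_of_isUnit_sub (sub_ne_zero.mpr ha).isUnit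
  have hsq : (f ^ 2).eigenspace (a ^ 2) = LinearMap.ker (aeval f ((X - C a) * (X - C (-a)))) := by
    have : (X - C a) * (X - C (-a)) = X ^ 2 - C (a ^ 2) := by rw [C_neg, C_pow]; ring
    rw [this, eigenspace_eq_ker_aeval]
    simp
  rw [hsq, f.eigenspace_eq_ker_aeval, f.eigenspace_eq_ker_aeval,
    ← sup_ker_aeval_eq_ker_aeval_mul_of_coprime f hcop,
    ← Submodule.finrank_sup_add_finrank_inf_eq, (disjoint_ker_aeval_of_isCoprime f hcop).eq_bot,
    finrank_bot, add_zero]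

theorem dvd_finrank_eigenspace_pow_mul_two_pow (f : End F V) (h2 : (2 : F) ≠ 0)
    {k m : ℕ} (h1 : m ∣ finrank F ((f ^ k).eigenspace 1))
    (hneg : ∀ j, m ∣ finrank F ((f ^ (k * 2 ^ j)).eigenspace (-1))) (j : ℕ) :
    m ∣ finrank F ((f ^ (k * 2 ^ j)).eigenspace 1) := by
  induction j with
  | zero => rwa [pow_zero, mul_one]
  | succ j ih =>
    have hne : (1 : F) ≠ -1 := fun h => h2 (by linear_combination h)
    rw [pow_succ, ← mul_assoc, pow_mul, ← one_pow 2, finrank_eigenspace_sq _ hne]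
    exact dvd_add ih (hneg j)

theorem eigenspace_one_eq_eigenspace_neg_one_of_mul_eq_neg_one {a b : End F V}
    (h : a * b = -1) : a.eigenspace 1 = b.eigenspace (-1) := by
  have h' : b * a = -1 := by
    rw [← neg_eq_iff_eq_neg, ← neg_mul, mul_eq_one_comm, mul_neg, h, neg_neg]
  ext v
  simp only [mem_eigenspace_iff, one_smul, neg_one_smul]
  constructor
  · intro hv
    rw [← hv, ← mul_apply, h', hv]
    rfl
  · intro hv
    have hab : a (b v) = -v := by rw [← mul_apply, h]; rfl
    rwa [hv, map_neg, neg_inj] at hab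

end Module.End

namespace Matrix

variable {F : Type*} [Field F] {l : Type*} [Fintype l] [DecidableEq l]

theorem finrank_eigenspace_toLin'_add_rank {n : Type*} [Fintype n] [DecidableEq n]
    (M : Matrix n n F) (c : F) :
    finrank F (Module.End.eigenspace (toLin' M) c) + (M - c • 1).rank = Fintype.card n := by
  rw [Module.End.eigenspace_def, Module.End.one_eq_id, ← toLin'_one, ← map_smul, ← map_sub,
    Matrix.rank, add_comm, ← toLin'_apply', LinearMap.finrank_range_add_finrank_ker]
  exact finrank_fintype_fun_eq_card F

theorem rank_inv_sub_smul_one {n : Type*} [Fintype n] [DecidableEq n]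
    {M : Matrix n n F} (hM : IsUnit M.det) {c : F} (hc : c ≠ 0) :
    (M⁻¹ - c • 1).rank = (M - c⁻¹ • 1).rank := by
  have : M⁻¹ - c • 1 = (-c) • M⁻¹ * (M - c⁻¹ • 1) := by
    rw [Matrix.mul_sub, smul_mul_assoc, nonsing_inv_mul _ hM, Matrix.mul_smul, mul_one, smul_smul,
      mul_neg, inv_mul_cancel₀ hc]
    module
  have hunit : IsUnit ((-c) • M⁻¹).det := by
    rw [det_smul, det_nonsing_inv]
    exact ((neg_ne_zero.mpr hc).isUnit.pow _).mul hM.ringInverse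
  rw [this, rank_mul_eq_right_of_isUnit_det _ _ hunit]

theorem rank_sub_smul_one_inv_of_mem_symplecticGroup {M : Matrix (l ⊕ l) (l ⊕ l) F}
    (hM : M ∈ symplecticGroup l F) {c : F} (hc : c ≠ 0) :
    (M - c⁻¹ • 1).rank = (M - c • 1).rank := by
  have hJ := isUnit_det_J l F
  have hJ' := SymplecticGroup.symplectic_det <| SymplecticGroup.neg_mem <| SymplecticGroup.J_mem l F
  have hconj : J l F * (M⁻¹ - c • 1) * -J l F = (M - c • 1)ᵀ := by
    rw [SymplecticGroup.inv_eq_symplectic_inv M hM, transpose_sub, transpose_smul, transpose_one]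
    calc J l F * (-J l F * Mᵀ * J l F - c • 1) * -J l F
        = (J l F * J l F) * Mᵀ * (J l F * J l F) + c • (J l F * J l F) := by noncomm_ring
      _ = Mᵀ - c • 1 := by simp [J_squared, sub_eq_add_neg]
  rw [← rank_inv_sub_smul_one (SymplecticGroup.symplectic_det hM) hc,
    ← rank_mul_eq_right_of_isUnit_det _ _ hJ, ← rank_mul_eq_left_of_isUnit_det _ _ hJ', hconj,
    rank_transpose]

theorem finrank_eigenspace_toLin'_inv_of_mem_symplecticGroup
    {M : Matrix (l ⊕ l) (l ⊕ l) F} (hM : M ∈ symplecticGroup l F) {c : F} (hc : c ≠ 0) :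
    finrank F (Module.End.eigenspace (toLin' M) c⁻¹) =
      finrank F (Module.End.eigenspace (toLin' M) c) := by
  have h := finrank_eigenspace_toLin'_add_rank M c
  have h' := finrank_eigenspace_toLin'_add_rank M c⁻¹
  rw [rank_sub_smul_one_inv_of_mem_symplecticGroup hM hc] at h'
  omega

variable [Fintype F]

theorem eight_dvd_finrank_eigenspace_pow_eight_neg_one (hF : Fintype.card F % 8 = 5)
    {M : Matrix (l ⊕ l) (l ⊕ l) F} (hM : M ∈ symplecticGroup l F) :
    8 ∣ finrank F (Module.End.eigenspace (toLin' M ^ 8) (-1)) := by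
  obtain ⟨i, hi⟩ := FiniteField.isSquare_neg_one_iff.mpr (by omega : Fintype.card F % 4 ≠ 3)
  have h2 := FiniteField.two_ne_zero_of_card_mod_two_eq_one (F := F) (by omega)
  have hi0 : i ≠ 0 := by rintro rfl; simp at hi
  have hne : i ≠ -i := fun h => mul_ne_zero h2 hi0 (by linear_combination h)
  have hsplit := Module.End.finrank_eigenspace_sq (toLin' M ^ 4) hne
  rw [← pow_mul, sq i, ← hi, show 4 * 2 = 8 from rfl] at hsplit
  have hdual : finrank F (Module.End.eigenspace (toLin' M ^ 4) (-i)) =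
      finrank F (Module.End.eigenspace (toLin' M ^ 4) i) := by
    rw [← inv_eq_of_mul_eq_one_right (by linear_combination hi : i * -i = 1), ← toLin'_pow]
    exact finrank_eigenspace_toLin'_inv_of_mem_symplecticGroup (pow_mem hM 4) hi0
  have h4 : 4 ∣ finrank F (Module.End.eigenspace (toLin' M ^ 4) i) :=
    Module.End.two_pow_dvd_finrank_eigenspace_pow_two_pow hF (toLin' M) 2 (by rw [sq, ← hi])
  omega

theorem eight_dvd_card_of_pow_eight_mul_pow_eight_eq_neg_one
    (hF : Fintype.card F % 8 = 5) {M N : Matrix (l ⊕ l) (l ⊕ l) F}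
    (hM : M ∈ symplecticGroup l F) (hN : N ∈ symplecticGroup l F) {α : ℕ}
    (hMα : M ^ 2 ^ α = 1) (hMN : M ^ 8 * N ^ 8 = -1) : 8 ∣ Fintype.card (l ⊕ l) := by
  have hfg : toLin' M ^ 8 * toLin' N ^ 8 = -1 := by
    rw [← toLin'_pow, ← toLin'_pow, Module.End.mul_eq_comp, ← toLin'_mul, hMN, map_neg,
      toLin'_one, Module.End.one_eq_id]
  have h8 : 8 ∣ finrank F (Module.End.eigenspace (toLin' M ^ 8) 1) := by
    rw [Module.End.eigenspace_one_eq_eigenspace_neg_one_of_mul_eq_neg_one hfg]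
    exact eight_dvd_finrank_eigenspace_pow_eight_neg_one hF hN
  have hV := Module.End.dvd_finrank_eigenspace_pow_mul_two_pow (toLin' M)
    (FiniteField.two_ne_zero_of_card_mod_two_eq_one (by omega)) h8
    (fun j => by
      rw [mul_comm, pow_mul, ← toLin'_pow]
      exact eight_dvd_finrank_eigenspace_pow_eight_neg_one hF (pow_mem hM _)) α
  rwa [mul_comm, pow_mul, ← toLin'_pow, hMα, toLin'_one, ← Module.End.one_eq_id, one_pow,
    Module.End.eigenspace_def, one_smul, sub_self, LinearMap.ker_zero, finrank_top,
    finrank_fintype_fun_eq_card] at hV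

end Matrix

theorem stmt15_general (n q : ℕ) (hn : Odd n)
    (hq8 : q ≡ 5 [MOD 8])
    (F : Type) [Field F] [Fintype F] (hF : Fintype.card F = q) :
    ¬ Function.Surjective (fun xy :
        Matrix.symplecticGroup (Fin n) F × Matrix.symplecticGroup (Fin n) F =>
          xy.1 ^ 8 * xy.2 ^ 8) := by
  intro hsurj
  let z : symplecticGroup (Fin n) F := ⟨-1, SymplecticGroup.neg_mem (one_mem _)⟩
  have hz : ∀ g, Commute g z := fun g => Subtype.ext (by simp [z])
  have hz2 : z ^ 2 = 1 := Subtype.ext (by simp [z])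
  obtain ⟨⟨x, y⟩, hxy⟩ := hsurj z
  obtain ⟨s, t, ⟨α, hs⟩, hst⟩ := exists_pow_two_pow_eq_one_and_pow_mul_pow_eq hz hz2 hxy
  have h8 := eight_dvd_card_of_pow_eight_mul_pow_eight_eq_neg_one (l := Fin n)
    (by rw [hF]; exact hq8)
    s.2 t.2 (congrArg Subtype.val hs) (congrArg Subtype.val hst)
  rw [Fintype.card_sum, Fintype.card_fin] at h8
  obtain ⟨k, rfl⟩ := hn
  omega

theorem stmt15 (n q : ℕ) (hn : Odd n) (hn0 : 0 < n) (hq : IsPrimePow q)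
    (hq8 : q ≡ 5 [MOD 8])
    (F : Type) [Field F] [Fintype F] (hF : Fintype.card F = q) :
    ¬ Function.Surjective (fun xy :
        Matrix.symplecticGroup (Fin n) F × Matrix.symplecticGroup (Fin n) F =>
          xy.1 ^ 8 * xy.2 ^ 8) :=
  stmt15_general n q hn hq8 F hF
end

section
/- Let q ≥ 3 be an odd prime power. Then every element g of SL_2(q) can be written as a product of two squares: g = x^2 y^2 for some x, y ∈ SL_2(q). -/
/-!
By Cayley–Hamilton, `A ∈ SL₂(F)` satisfies `(A + 1)² = (tr A + 2) • A`, so `A` is a square whenever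
`tr A + 2` is a nonzero square; since `2 ≠ 0`, this covers every element of trace `2`, unipotent ones
included. If the lower-left entry of `g` is nonzero, an upper unipotent `u` gives `tr (g u) = 2`, so
`g = (g u) u⁻¹` is a product of two squares. Every `g ≠ ±1` is conjugate to such a matrix by a lower
unipotent, and `±1` are handled directly.
-/

open Matrix
open scoped MatrixGroups

theorem Matrix.sq_fin_two {R : Type*} [CommRing R] (M : Matrix (Fin 2) (Fin 2) R) :
    M ^ 2 = M.trace • M - M.det • 1 := by
  nontriviality R
  have := M.aeval_self_charpoly
  simp only [charpoly_fin_two, map_add, map_sub, map_pow, Polynomial.aeval_X, map_mul,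
    Polynomial.aeval_C, Algebra.algebraMap_eq_smul_one, smul_mul_assoc, one_mul] at this
  rw [← sub_eq_zero, ← this]
  abel

theorem Matrix.det_add_one_fin_two {R : Type*} [CommRing R] (M : Matrix (Fin 2) (Fin 2) R) :
    (M + 1).det = M.det + M.trace + 1 := by
  rw [det_fin_two, det_fin_two, trace_fin_two, one_fin_two]
  simp only [add_apply, of_apply, cons_val_zero, cons_val_one]
  ring

theorem Matrix.add_one_sq_of_det_eq_one {R : Type*} [CommRing R] {M : Matrix (Fin 2) (Fin 2) R}
    (h : M.det = 1) : (M + 1) ^ 2 = (M.trace + 2) • M := by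
  rw [sq, add_mul, mul_add, mul_add, mul_one, one_mul, mul_one, ← sq, sq_fin_two, h]
  module

theorem exists_sq_mul_sq_of_conj {G : Type*} [Group G] {g h : G}
    (H : ∃ x y : G, h * g * h⁻¹ = x ^ 2 * y ^ 2) : ∃ x y : G, g = x ^ 2 * y ^ 2 := by
  obtain ⟨x, y, hxy⟩ := H
  refine ⟨MulAut.conj h⁻¹ x, MulAut.conj h⁻¹ y, ?_⟩
  rw [← map_pow, ← map_pow, ← map_mul, ← hxy]
  simp [mul_assoc]

namespace Matrix.SpecialLinearGroup

section CommRing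

variable {R : Type*} [CommRing R]

def upperUnipotent (w : R) : SL(2, R) := ⟨!![1, w; 0, 1], by simp [det_fin_two]⟩

def lowerUnipotent (t : R) : SL(2, R) := ⟨!![1, 0; t, 1], by simp [det_fin_two]⟩

theorem coe_upperUnipotent (w : R) :
    (upperUnipotent w : Matrix (Fin 2) (Fin 2) R) = !![1, w; 0, 1] := rfl

theorem coe_lowerUnipotent (t : R) :
    (lowerUnipotent t : Matrix (Fin 2) (Fin 2) R) = !![1, 0; t, 1] := rfl

theorem trace_mul_upperUnipotent (g : SL(2, R)) (w : R) :
    trace ((g * upperUnipotent w : SL(2, R)) : Matrix (Fin 2) (Fin 2) R) =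
      trace (g : Matrix (Fin 2) (Fin 2) R) + w * g 1 0 := by
  rw [coe_mul, coe_upperUnipotent, trace_fin_two, trace_fin_two]
  simp only [mul_apply, Fin.sum_univ_two, of_apply, cons_val_zero, cons_val_one]
  ring

theorem lowerUnipotent_conj_apply_one_zero (g : SL(2, R)) (t : R) :
    (lowerUnipotent t * g * (lowerUnipotent t)⁻¹) 1 0 =
      g 1 0 + t * (g 0 0 - g 1 1) - t ^ 2 * g 0 1 := by
  rw [coe_mul, coe_mul, coe_inv, coe_lowerUnipotent, adjugate_fin_two_of]
  simp only [mul_apply, Fin.sum_univ_two, of_apply, cons_val_zero, cons_val_one]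
  ring

end CommRing

variable {F : Type*} [Field F]

theorem isSquare_of_trace_add_two_eq_sq (A : SL(2, F)) {τ : F} (hτ : τ ≠ 0)
    (h : trace (A : Matrix (Fin 2) (Fin 2) F) + 2 = τ ^ 2) : IsSquare A := by
  set M : Matrix (Fin 2) (Fin 2) F := ↑A
  have hM : M.det = 1 := A.2
  have hdet : det (M + 1) = τ ^ 2 := by
    rw [det_add_one_fin_two, hM, ← h]
    ring
  refine ⟨⟨τ⁻¹ • (M + 1), by rw [det_smul, hdet]; simp [hτ]⟩, Subtype.ext ?_⟩
  show M = τ⁻¹ • (M + 1) * τ⁻¹ • (M + 1)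
  rw [smul_mul_smul, ← sq (M + 1), add_one_sq_of_det_eq_one hM, h, smul_smul,
    show τ⁻¹ * τ⁻¹ * τ ^ 2 = 1 by field_simp, one_smul]

theorem isSquare_upperUnipotent (h2 : (2 : F) ≠ 0) (w : F) : IsSquare (upperUnipotent w) :=
  isSquare_of_trace_add_two_eq_sq _ h2 (by rw [coe_upperUnipotent, trace_fin_two_of]; norm_num)

theorem exists_sq_mul_sq_of_apply_one_zero_ne_zero (h2 : (2 : F) ≠ 0) {g : SL(2, F)}
    (hg : g 1 0 ≠ 0) : ∃ x y : SL(2, F), g = x ^ 2 * y ^ 2 := by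
  set w := (2 - trace (g : Matrix (Fin 2) (Fin 2) F)) / g 1 0
  have htr : trace ((g * upperUnipotent w : SL(2, F)) : Matrix (Fin 2) (Fin 2) F) + 2 = 2 ^ 2 := by
    rw [trace_mul_upperUnipotent, div_mul_cancel₀ _ hg]
    ring
  obtain ⟨x, hx⟩ := isSquare_of_trace_add_two_eq_sq _ h2 htr
  obtain ⟨y, hy⟩ := (isSquare_upperUnipotent h2 w).inv
  exact ⟨x, y, by rw [sq, sq, ← hx, ← hy, mul_inv_cancel_right]⟩

theorem eq_one_or_eq_neg_one_of_scalar {g : SL(2, F)} (hb : g 0 1 = 0) (hc : g 1 0 = 0)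
    (had : g 0 0 = g 1 1) : g = 1 ∨ g = -1 := by
  have hdet : g 0 0 * g 1 1 - g 0 1 * g 1 0 = 1 := by rw [← det_fin_two]; exact g.2
  rw [hb, hc, ← had, mul_zero, sub_zero, mul_self_eq_one_iff] at hdet
  rcases hdet with h | h
  · left; ext i j; fin_cases i <;> fin_cases j <;> simp [h, hb, hc, ← had]
  · right; ext i j; fin_cases i <;> fin_cases j <;> simp [h, hb, hc, ← had]

theorem exists_conj_apply_one_zero_ne_zero (h2 : (2 : F) ≠ 0) {g : SL(2, F)} (h1 : g ≠ 1)
    (hm1 : g ≠ -1) : ∃ h : SL(2, F), (h * g * h⁻¹) 1 0 ≠ 0 := by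
  by_contra! H
  have h0 := H (lowerUnipotent 0)
  have hp := H (lowerUnipotent 1)
  have hn := H (lowerUnipotent (-1))
  simp only [lowerUnipotent_conj_apply_one_zero] at h0 hp hn
  have hc : g 1 0 = 0 := by linear_combination h0
  have hb : g 0 1 = 0 := by
    refine (mul_eq_zero.1 ?_).resolve_left h2
    linear_combination -hp - hn + 2 * h0
  have had : g 0 0 = g 1 1 := by linear_combination hp - h0 + hb
  exact (eq_one_or_eq_neg_one_of_scalar hb hc had).elim h1 hm1

theorem exists_sq_mul_sq (h2 : (2 : F) ≠ 0) (g : SL(2, F)) :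
    ∃ x y : SL(2, F), g = x ^ 2 * y ^ 2 := by
  by_cases h1 : g = 1
  · exact ⟨1, 1, by simp [h1]⟩
  by_cases hm1 : g = -1
  · subst hm1
    refine ⟨⟨!![0, -1; 1, 0], by simp [det_fin_two]⟩, 1, Subtype.ext ?_⟩
    show -1 = !![0, -1; 1, 0] ^ 2 * 1 ^ 2
    simp [sq, one_fin_two]
  obtain ⟨h, hh⟩ := exists_conj_apply_one_zero_ne_zero h2 h1 hm1
  exact exists_sq_mul_sq_of_conj (exists_sq_mul_sq_of_apply_one_zero_ne_zero h2 hh)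

end Matrix.SpecialLinearGroup

theorem stmt17_general (q : ℕ) (hodd : Odd q)
    (F : Type) [Field F] [Fintype F] (hF : Fintype.card F = q) :
    ∀ g : Matrix.SpecialLinearGroup (Fin 2) F,
      ∃ x y : Matrix.SpecialLinearGroup (Fin 2) F, g = x ^ 2 * y ^ 2 := by
  have h2 : (2 : F) ≠ 0 := Ring.two_ne_zero <| mt FiniteField.even_card_of_char_two <| by
    rw [hF, Nat.odd_iff.mp hodd]
    exact one_ne_zero
  exact Matrix.SpecialLinearGroup.exists_sq_mul_sq h2

theorem stmt17 (q : ℕ) (hq : IsPrimePow q) (hodd : Odd q) (hq3 : 3 ≤ q)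
    (F : Type) [Field F] [Fintype F] (hF : Fintype.card F = q) :
    ∀ g : Matrix.SpecialLinearGroup (Fin 2) F,
      ∃ x y : Matrix.SpecialLinearGroup (Fin 2) F, g = x ^ 2 * y ^ 2 :=
  stmt17_general q hodd F hF
end

section
/- Let q be an odd prime power, ε = ±1, n ≥ 2, and let z be an element of the center of SL^ε_n(q) whose order is a power of 2. Then z can be written as a product of two squares: z = x^2 y^2 for some x, y ∈ SL^ε_n(q). -/
/-!
A central element `z` of `SL_n(q)` or `SU_n(q)` is a scalar `r • 1`: for `SL` this is
`Matrix.SpecialLinearGroup.mem_center_iff`; for `SU`, commuting with the unitary diagonal matrices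
`diag(a, a⁻¹)`, where `a ^ (q + 1) = 1 ≠ a ^ 2`, kills the off-diagonal entries of `z`, and
commuting with the signed transpositions equalises its diagonal entries.

Since `r ^ n = det z = 1` and the order of `r` is a power of `2`, an odd `n` forces `r = 1`.
For `n = 2p`, `r • 1` is built blockwise from the `2 × 2` blocks `!![0, 1; c, 0]`,
whose square is `c • 1` and whose determinant is `-c`. Taking `c = r` in every block gives
`x` with `x ^ 2 = r • 1` and `det x = (-r) ^ p = s = ±1`; replacing one block by the one for
`s * r`, and letting `y` be the identity except for a block of determinant `1` and square `s • 1`,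
gives `x ^ 2 * y ^ 2 = r • 1` with `det x = det y = 1`. All blocks are unitary once
`r ^ (q + 1) = 1`: the signs `s = ±1` are harmless because `q + 1` is even.
-/

open Matrix

section Unitary

variable {R : Type*} [CommRing R] {m m' : Type*} [Fintype m] [DecidableEq m] [Fintype m']
  [DecidableEq m'] {q : ℕ}

/-- `UnitaryMat` over an arbitrary finite index type; on `Fin n` the two agree by definition. -/
def IsUnitaryMat (q : ℕ) (M : Matrix m m R) : Prop :=
  (M.map (· ^ q))ᵀ * M = 1

theorem isUnitaryMat_diagonal_iff (hq : q ≠ 0) {d : m → R} :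
    IsUnitaryMat q (diagonal d) ↔ ∀ i, d i ^ (q + 1) = 1 := by
  rw [IsUnitaryMat, diagonal_map (f := (· ^ q)) (zero_pow hq), diagonal_transpose,
    diagonal_mul_diagonal, ← diagonal_one, diagonal_eq_diagonal_iff]
  simp only [pow_succ]

theorem isUnitaryMat_one (hq : q ≠ 0) : IsUnitaryMat q (1 : Matrix m m R) := by
  rw [← diagonal_one, isUnitaryMat_diagonal_iff hq]
  simp

theorem IsUnitaryMat.reindex {M : Matrix m m R} (e : m ≃ m') (h : IsUnitaryMat q M) :
    IsUnitaryMat q (reindex e e M) := by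
  rw [IsUnitaryMat, reindex_apply, ← submatrix_map, transpose_submatrix,
    submatrix_mul_equiv, h, submatrix_one_equiv]

theorem IsUnitaryMat.blockDiagonal {ι : Type*} [Fintype ι] [DecidableEq ι] (hq : q ≠ 0)
    {M : ι → Matrix m m R} (h : ∀ i, IsUnitaryMat q (M i)) :
    IsUnitaryMat q (blockDiagonal M) := by
  rw [IsUnitaryMat, blockDiagonal_map _ (· ^ q) (zero_pow hq), blockDiagonal_transpose,
    ← blockDiagonal_mul, ← blockDiagonal_one]
  exact congrArg _ (funext h)

end Unitary

theorem Even.pow_eq_one_of_mul_self_eq_one {M : Type*} [Monoid M] {k : ℕ} (hk : Even k) {s : M}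
    (hs : s * s = 1) : s ^ k = 1 := by
  obtain ⟨t, rfl⟩ := hk
  rw [← two_mul, pow_mul, sq, hs, one_pow]

section SqrtBlock

variable {R : Type*} [CommRing R] {q : ℕ}

def sqrtBlock (c : R) : Matrix (Fin 2) (Fin 2) R :=
  !![0, 1; c, 0]

theorem sqrtBlock_mul_self (c : R) : sqrtBlock c * sqrtBlock c = c • 1 := by
  ext i j
  fin_cases i <;> fin_cases j <;> simp [sqrtBlock]

theorem det_sqrtBlock (c : R) : (sqrtBlock c).det = -c := by
  simp [sqrtBlock, det_fin_two_of]

theorem isUnitaryMat_sqrtBlock (hq : q ≠ 0) {c : R} (hc : c ^ (q + 1) = 1) :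
    IsUnitaryMat q (sqrtBlock c) := by
  rw [pow_succ] at hc
  rw [IsUnitaryMat]
  ext i j
  fin_cases i <;> fin_cases j <;> simp [sqrtBlock, hq, hc, mul_apply, Fin.sum_univ_two]

end SqrtBlock

variable {K : Type*} [Field K]

theorem exists_det_eq_one_mul_self_eq_smul_one {q : ℕ} (hq : Odd q) {s : K} (hs : s * s = 1) :
    ∃ B : Matrix (Fin 2) (Fin 2) K, B.det = 1 ∧ B * B = s • 1 ∧ IsUnitaryMat q B := by
  rcases mul_self_eq_one_iff.mp hs with rfl | rfl
  · exact ⟨1, det_one, by simp, isUnitaryMat_one hq.pos.ne'⟩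
  · exact ⟨sqrtBlock (-1), by simp [det_sqrtBlock], sqrtBlock_mul_self _,
      isUnitaryMat_sqrtBlock hq.pos.ne' hq.add_one.neg_one_pow⟩

theorem exists_blockDiagonal_sq_mul_sq {ι : Type*} [Fintype ι] [DecidableEq ι] [Nonempty ι]
    {q : ℕ} (hq : Odd q) {l : K} (hl : l ^ (2 * Fintype.card ι) = 1) :
    ∃ x y : Matrix (Fin 2 × ι) (Fin 2 × ι) K, x.det = 1 ∧ y.det = 1 ∧ x ^ 2 * y ^ 2 = l • 1 ∧
      (l ^ (q + 1) = 1 → IsUnitaryMat q x ∧ IsUnitaryMat q y) := by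
  set s := (-l) ^ Fintype.card ι
  have hs : s * s = 1 := by rw [← mul_pow, neg_mul_neg, ← pow_two, ← pow_mul, hl]
  obtain ⟨B, hBdet, hBsq, hBunit⟩ := exists_det_eq_one_mul_self_eq_smul_one hq hs
  obtain ⟨i₀⟩ := ‹Nonempty ι›
  set σ : ι → K := Pi.mulSingle i₀ s
  set β : ι → Matrix (Fin 2) (Fin 2) K := Pi.mulSingle i₀ B
  have hσ (i : ι) : σ i * σ i = 1 := by
    rcases eq_or_ne i i₀ with rfl | hi <;> simp [σ, *]
  have hβ (i : ι) : β i * β i = σ i • 1 := by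
    rcases eq_or_ne i i₀ with rfl | hi <;> simp [σ, β, *]
  refine ⟨blockDiagonal fun i => sqrtBlock (σ i * l), blockDiagonal β, ?_, ?_, ?_,
    fun hlq => ⟨?_, ?_⟩⟩
  · simp_rw [det_blockDiagonal, det_sqrtBlock, ← mul_neg, Finset.prod_mul_distrib]
    rw [Fintype.prod_pi_mulSingle', Finset.prod_const, Finset.card_univ, hs]
  · rw [det_blockDiagonal]
    refine Finset.prod_eq_one fun i _ => ?_
    rcases eq_or_ne i i₀ with rfl | hi <;> simp [β, *]
  · rw [sq, sq, ← blockDiagonal_mul, ← blockDiagonal_mul, ← blockDiagonal_mul,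
      ← blockDiagonal_one, ← blockDiagonal_smul]
    congr 1
    ext1 i
    rw [sqrtBlock_mul_self, hβ, smul_mul_smul_comm, mul_one, mul_right_comm, hσ, one_mul]
    rfl
  · refine .blockDiagonal hq.pos.ne' fun i => isUnitaryMat_sqrtBlock hq.pos.ne' ?_
    rw [mul_pow, hq.add_one.pow_eq_one_of_mul_self_eq_one (hσ i), hlq, one_mul]
  · refine .blockDiagonal hq.pos.ne' fun i => ?_
    rcases eq_or_ne i i₀ with rfl | hi
    · simpa [β] using hBunit
    · simpa [β, hi] using isUnitaryMat_one hq.pos.ne'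

theorem exists_sq_mul_sq_eq_smul_one {n : ℕ} (hn : 0 < n) (hev : Even n) {q : ℕ} (hq : Odd q)
    {l : K} (hl : l ^ n = 1) :
    ∃ x y : Matrix (Fin n) (Fin n) K, x.det = 1 ∧ y.det = 1 ∧ x ^ 2 * y ^ 2 = l • 1 ∧
      (l ^ (q + 1) = 1 → UnitaryMat q x ∧ UnitaryMat q y) := by
  obtain ⟨p, rfl⟩ := hev.two_dvd
  have : Nonempty (Fin p) := ⟨⟨0, by omega⟩⟩
  obtain ⟨x, y, hx, hy, hxy, hunit⟩ :=
    exists_blockDiagonal_sq_mul_sq (ι := Fin p) hq (by rwa [Fintype.card_fin])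
  let e : Fin 2 × Fin p ≃ Fin (2 * p) := finProdFinEquiv
  refine ⟨reindex e e x, reindex e e y, by rwa [det_reindex_self], by rwa [det_reindex_self],
    ?_, fun hlq => ⟨(hunit hlq).1.reindex e, (hunit hlq).2.reindex e⟩⟩
  simp only [← coe_reindexAlgEquiv K K, ← map_pow, ← map_mul, hxy, map_smul, map_one]

theorem eq_one_of_pow_eq_one_of_orderOf_eq_two_pow {G : Type*} [Monoid G] {r : G} {n k : ℕ}
    (hn : Odd n) (hr : r ^ n = 1) (hk : orderOf r = 2 ^ k) : r = 1 := by
  have h2 : 2 ^ k ∣ n := hk ▸ orderOf_dvd_of_pow_eq_one hr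
  rw [← orderOf_eq_one_iff, hk]
  exact ((Nat.coprime_two_left.mpr hn).pow_left k).eq_one_of_dvd h2

theorem exists_sq_mul_sq_of_scalar_eq {n : ℕ} (hn : 0 < n) {q : ℕ} (hq : Odd q)
    {z : Matrix.SpecialLinearGroup (Fin n) K} {r : K} (hz : scalar (Fin n) r = z)
    (hord : ∃ k, orderOf z = 2 ^ k) :
    ∃ x y : Matrix.SpecialLinearGroup (Fin n) K, z = x ^ 2 * y ^ 2 ∧
      (r ^ (q + 1) = 1 → UnitaryMat q (x : Matrix (Fin n) (Fin n) K) ∧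
        UnitaryMat q (y : Matrix (Fin n) (Fin n) K)) := by
  have : Nonempty (Fin n) := ⟨⟨0, hn⟩⟩
  have hrn : r ^ n = 1 := by
    simpa [scalar_apply] using (congrArg det hz).trans z.2
  have hzr : (z : Matrix (Fin n) (Fin n) K) = r • 1 := by
    rw [← hz, scalar_apply, smul_one_eq_diagonal]
  rcases n.even_or_odd with hev | hodd
  · obtain ⟨x, y, hx, hy, hxy, hunit⟩ := exists_sq_mul_sq_eq_smul_one hn hev hq hrn
    exact ⟨⟨x, hx⟩, ⟨y, hy⟩, Subtype.ext (hzr.trans hxy.symm), hunit⟩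
  · obtain ⟨k, hk⟩ := hord
    have hr : orderOf r = 2 ^ k := by
      rw [← hk, ← orderOf_injective _ Matrix.SpecialLinearGroup.coeMonoidHom_injective z,
        Matrix.SpecialLinearGroup.coeMonoidHom_apply, ← hz]
      exact (orderOf_injective (scalar (Fin n)).toMonoidHom (fun _ _ => scalar_inj.mp) r).symm
    have hz1 : z = 1 := Subtype.ext (by
      rw [hzr, eq_one_of_pow_eq_one_of_orderOf_eq_two_pow hodd hrn hr, one_smul]; rfl)
    exact ⟨1, 1, by simp [hz1],
      fun _ => ⟨isUnitaryMat_one hq.pos.ne', isUnitaryMat_one hq.pos.ne'⟩⟩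

theorem Matrix.eq_of_diagonal_mul_eq_mul_diagonal {R : Type*} [CommRing R] [NoZeroDivisors R]
    {m : Type*} [Fintype m] [DecidableEq m] {d : m → R} {M : Matrix m m R}
    (h : diagonal d * M = M * diagonal d) {i j : m} (hij : M i j ≠ 0) : d i = d j := by
  have hij' := congr_fun (congr_fun h i) j
  rw [diagonal_mul, mul_diagonal, mul_comm] at hij'
  exact mul_left_cancel₀ hij hij'

section SignedSwap

variable {R : Type*} [CommRing R] {m : Type*} [Fintype m] [DecidableEq m]

def signedSwap (i j : m) : Matrix m m R :=
  (Equiv.swap i j).permMatrix R * diagonal (Pi.mulSingle i (-1))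

theorem det_signedSwap {i j : m} (hij : i ≠ j) : (signedSwap i j : Matrix m m R).det = 1 := by
  simp [signedSwap, Equiv.Perm.sign_swap hij]

theorem signedSwap_apply_left_right {i j : m} (hij : i ≠ j) :
    (signedSwap i j : Matrix m m R) i j = 1 := by
  simp [signedSwap, hij.symm, PEquiv.toMatrix_apply]

theorem isUnitaryMat_signedSwap {q : ℕ} (hq : Odd q) (i j : m) :
    IsUnitaryMat q (signedSwap i j : Matrix m m R) := by
  have hmap : (signedSwap i j : Matrix m m R).map (· ^ q) = signedSwap i j := by
    ext a b
    simp only [signedSwap, map_apply, mul_diagonal, mul_pow]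
    congr 1
    · by_cases h : Equiv.swap i j a = b <;> simp [PEquiv.toMatrix_apply, h, hq.pos.ne']
    · rcases eq_or_ne b i with rfl | hb <;> simp [*, hq.neg_one_pow]
  rw [IsUnitaryMat, hmap, signedSwap, transpose_mul, transpose_permMatrix, diagonal_transpose,
    mul_assoc, ← mul_assoc (Equiv.Perm.permMatrix _ _), ← permMatrix_mul, mul_inv_cancel,
    permMatrix_one, one_mul, diagonal_mul_diagonal, ← diagonal_one]
  congr 1
  ext k
  rcases eq_or_ne k i with rfl | hk <;> simp [*]

end SignedSwap

section SUCenter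

variable {n q : ℕ}

theorem diag_eq_of_forall_commute_su (hq : Odd q) {z : Matrix.SpecialLinearGroup (Fin n) K}
    (hcomm : ∀ g ∈ suSet n q K, g * z = z * g) (hz : (z : Matrix (Fin n) (Fin n) K).IsDiag)
    (i j : Fin n) : z i i = z j j := by
  rcases eq_or_ne i j with rfl | hij
  · rfl
  have hS : signedSwap i j * (z : Matrix (Fin n) (Fin n) K) =
      (z : Matrix (Fin n) (Fin n) K) * signedSwap i j :=
    congrArg Subtype.val
      (hcomm ⟨signedSwap i j, det_signedSwap hij⟩ (isUnitaryMat_signedSwap hq i j))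
  rw [← hz.diagonal_diag] at hS
  exact eq_of_diagonal_mul_eq_mul_diagonal hS.symm
    (by rw [signedSwap_apply_left_right hij]; exact one_ne_zero)

variable [Fintype K]

theorem one_lt_of_card_eq_sq (hcard : Fintype.card K = q ^ 2) : 1 < q := by
  have h := hcard ▸ Fintype.one_lt_card (α := K)
  by_contra! hq
  interval_cases q <;> simp at h

theorem exists_pow_succ_eq_one_and_sq_ne_one (hcard : Fintype.card K = q ^ 2) :
    ∃ a : K, a ^ (q + 1) = 1 ∧ a ^ 2 ≠ 1 := by
  classical
  have hq := one_lt_of_card_eq_sq hcard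
  obtain ⟨g, hg⟩ := IsCyclic.exists_ofOrder_eq_natCard (α := Kˣ)
  have hcardU : Nat.card Kˣ = (q - 1) * (q + 1) := by
    rw [Nat.card_eq_fintype_card, Fintype.card_units, hcard, mul_comm, ← Nat.sq_sub_sq, one_pow]
  refine ⟨((g ^ (q - 1) : Kˣ) : K), ?_, ?_⟩
  · rw [← Units.val_pow_eq_pow_val, ← pow_mul, ← hcardU, ← hg, pow_orderOf_eq_one, Units.val_one]
  · rw [← Units.val_pow_eq_pow_val, ← pow_mul, Ne, Units.val_eq_one]
    refine pow_ne_one_of_lt_orderOf (by omega) ?_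
    rw [hg, hcardU]
    exact Nat.mul_lt_mul_of_pos_left (by omega) (by omega)

theorem isDiag_of_forall_commute_su (hcard : Fintype.card K = q ^ 2)
    {z : Matrix.SpecialLinearGroup (Fin n) K} (hcomm : ∀ g ∈ suSet n q K, g * z = z * g) :
    (z : Matrix (Fin n) (Fin n) K).IsDiag := by
  intro i j hij
  obtain ⟨a, ha, ha2⟩ := exists_pow_succ_eq_one_and_sq_ne_one hcard
  have ha0 : a ≠ 0 := by rintro rfl; simp at ha
  set d : Fin n → K := Pi.mulSingle i a * Pi.mulSingle j a⁻¹
  have hd (k : Fin n) : d k ^ (q + 1) = 1 := by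
    rw [← Pi.pow_apply, mul_pow, ← Pi.mulSingle_pow, ← Pi.mulSingle_pow, inv_pow, ha, inv_one,
      Pi.mulSingle_one, Pi.mulSingle_one, mul_one, Pi.one_apply]
  have hdet : (diagonal d).det = 1 := by
    simp only [det_diagonal, d, Pi.mul_apply, Finset.prod_mul_distrib,
      Fintype.prod_pi_mulSingle', mul_inv_cancel₀ ha0]
  have hunit : UnitaryMat q (diagonal d) :=
    (isUnitaryMat_diagonal_iff (Nat.ne_zero_of_lt (one_lt_of_card_eq_sq hcard))).2 hd
  by_contra hzij
  have hdij := eq_of_diagonal_mul_eq_mul_diagonal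
    (congrArg Subtype.val (hcomm ⟨diagonal d, hdet⟩ hunit)) hzij
  simp only [d, Pi.mul_apply, Pi.mulSingle_eq_same, Pi.mulSingle_eq_of_ne hij,
    Pi.mulSingle_eq_of_ne hij.symm, mul_one, one_mul] at hdij
  exact ha2 (by rw [sq]; nth_rewrite 2 [hdij]; exact mul_inv_cancel₀ ha0)

theorem exists_scalar_eq_of_forall_commute_su (hcard : Fintype.card K = q ^ 2) (hq : Odd q)
    (hn : 0 < n) {z : Matrix.SpecialLinearGroup (Fin n) K} (hz : z ∈ suSet n q K)
    (hcomm : ∀ g ∈ suSet n q K, g * z = z * g) :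
    ∃ r : K, scalar (Fin n) r = z ∧ r ^ (q + 1) = 1 := by
  have hdiag := isDiag_of_forall_commute_su hcard hcomm
  have hzr : scalar (Fin n) (z ⟨0, hn⟩ ⟨0, hn⟩) = z := by
    rw [scalar_apply, ← hdiag.diagonal_diag]
    exact congrArg diagonal (funext fun i => diag_eq_of_forall_commute_su hq hcomm hdiag _ i)
  refine ⟨_, hzr, ?_⟩
  have hz' : UnitaryMat q (z : Matrix (Fin n) (Fin n) K) := hz
  rw [← hzr, scalar_apply] at hz'
  exact (isUnitaryMat_diagonal_iff hq.pos.ne').1 hz' ⟨0, hn⟩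

end SUCenter

theorem stmt18_general (n q : ℕ) (hn : 2 ≤ n) (hodd : Odd q) :
    -- the case ε = +1: SL_n(q)
    (∀ (F : Type) [Field F] [Fintype F], Fintype.card F = q →
      ∀ z : Matrix.SpecialLinearGroup (Fin n) F,
        z ∈ Subgroup.center (Matrix.SpecialLinearGroup (Fin n) F) →
        (∃ k : ℕ, orderOf z = 2 ^ k) →
        ∃ x y : Matrix.SpecialLinearGroup (Fin n) F, z = x ^ 2 * y ^ 2) ∧
    -- the case ε = -1: SU_n(q) ⊆ SL_n(q^2)
    (∀ (K : Type) [Field K] [Fintype K], Fintype.card K = q ^ 2 →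
      ∀ z : Matrix.SpecialLinearGroup (Fin n) K, z ∈ suSet n q K →
        (∀ g ∈ suSet n q K, g * z = z * g) →
        (∃ k : ℕ, orderOf z = 2 ^ k) →
        ∃ x ∈ suSet n q K, ∃ y ∈ suSet n q K, z = x ^ 2 * y ^ 2) := by
  have hn0 : 0 < n := by omega
  refine ⟨fun F _ _ _ z hz hord => ?_, fun K _ _ hcard z hz hcomm hord => ?_⟩
  · obtain ⟨r, -, hr⟩ := Matrix.SpecialLinearGroup.mem_center_iff.mp hz
    obtain ⟨x, y, hxy, -⟩ := exists_sq_mul_sq_of_scalar_eq hn0 hodd hr hord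
    exact ⟨x, y, hxy⟩
  · obtain ⟨r, hr, hrq⟩ := exists_scalar_eq_of_forall_commute_su hcard hodd hn0 hz hcomm
    obtain ⟨x, y, hxy, hunit⟩ := exists_sq_mul_sq_of_scalar_eq hn0 hodd hr hord
    exact ⟨x, (hunit hrq).1, y, (hunit hrq).2, hxy⟩

theorem stmt18 (n q : ℕ) (hn : 2 ≤ n) (hq : IsPrimePow q) (hodd : Odd q) :
    -- the case ε = +1: SL_n(q)
    (∀ (F : Type) [Field F] [Fintype F], Fintype.card F = q →
      ∀ z : Matrix.SpecialLinearGroup (Fin n) F,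
        z ∈ Subgroup.center (Matrix.SpecialLinearGroup (Fin n) F) →
        (∃ k : ℕ, orderOf z = 2 ^ k) →
        ∃ x y : Matrix.SpecialLinearGroup (Fin n) F, z = x ^ 2 * y ^ 2) ∧
    -- the case ε = -1: SU_n(q) ⊆ SL_n(q^2)
    (∀ (K : Type) [Field K] [Fintype K], Fintype.card K = q ^ 2 →
      ∀ z : Matrix.SpecialLinearGroup (Fin n) K, z ∈ suSet n q K →
        (∀ g ∈ suSet n q K, g * z = z * g) →
        (∃ k : ℕ, orderOf z = 2 ^ k) →
        ∃ x ∈ suSet n q K, ∃ y ∈ suSet n q K, z = x ^ 2 * y ^ 2) :=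
  stmt18_general n q hn hodd
end
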